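/- arXiv:2404.18215 — 3 statements merged into one kernel-verified Lean document; each statement's English description precedes it below -/
import Mathlib

section
/- Let G be a finite acyclic directed graph without multiple arrows and let f be a filling of G. Then the Greene–Kleitman invariant GK_G(f) is a weakly decreasing sequence of nonnegative integers with finitely many nonzero terms, i.e. an integer partition; equivalently, the sequence ℓ ↦ M_ℓ^G(f) is concave and eventually constant. -/
/-!
Split every vertex `v` into an arc `(v, false) → (v, true)`. An `ℓ`-tuple of paths is then an
integral flow of value `ℓ` through every vertex it visits, and conversely, by acyclicity, an
integral flow of value `ℓ` decomposes into `ℓ` paths visiting every vertex it passes through; so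
`M_ℓ` is the largest weight of the set of vertices covered by a flow of value `ℓ`. Given flows
`F` and `G` of values `ℓ + 2` and `ℓ`, shifting one unit of flow from `F` to `G` along an
augmenting path of `F - G` yields two flows of value `ℓ + 1` which together cover the union, and
both cover the intersection, of the vertex sets covered by `F` and `G`. Hence
`M_{ℓ+2} + M_ℓ ≤ 2 M_{ℓ+1}`; as `M_ℓ` is also monotone and bounded by the total weight, the
differences `M_{ℓ+1} - M_ℓ` form a partition.
-/

noncomputable section

namespace RSKPaper

/-! ### Directed graphs, paths and Greene–Kleitman invariants -/

/-- A path in the directed graph with vertex set `V` and arrow relation `A`: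
a nonempty list of vertices of `V`, consecutive ones joined by arrows. -/
def IsPath {α : Type*} (V : Set α) (A : α → α → Prop) (l : List α) : Prop :=
  l ≠ [] ∧ (∀ v ∈ l, v ∈ V) ∧ l.Chain' A

/-- The `f`-weight of an `ℓ`-tuple of paths: the sum of `f` over the union of
the supports of the paths. -/
def wt {α : Type*} [DecidableEq α] (f : α → ℕ) {ℓ : ℕ} (γ : Fin ℓ → List α) : ℕ :=
  ∑ v ∈ Finset.univ.biUnion (fun i => (γ i).toFinset), f v

/-- `MGK V A f ℓ` is `M_ℓ^G(f)`: the maximal `f`-weight of an `ℓ`-tuple of paths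
in the graph `G = (V, A)` (and `0` for `ℓ = 0`). -/
def MGK {α : Type*} [DecidableEq α] (V : Set α) (A : α → α → Prop) (f : α → ℕ) (ℓ : ℕ) : ℕ :=
  sSup {w | ∃ γ : Fin ℓ → List α, (∀ i, IsPath V A (γ i)) ∧ w = wt f γ}

/-- The Greene–Kleitman invariant, `0`-indexed: `GK V A f k` is the `(k+1)`-st
part `M_{k+1}^G(f) - M_k^G(f)` of `GK_G(f)`. -/
def GK {α : Type*} [DecidableEq α] (V : Set α) (A : α → α → Prop) (f : α → ℕ) (k : ℕ) : ℕ :=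
  MGK V A f (k + 1) - MGK V A f k

/-! ### Integer partitions, Ferrers diagrams, diagonals -/

/-- `lam : ℕ → ℕ` (with `lam i` the `i`-th part for `i ≥ 1`) is an integer partition:
weakly decreasing with finitely many nonzero terms. -/
def IsPartition (lam : ℕ → ℕ) : Prop :=
  (∀ i, 1 ≤ i → lam (i + 1) ≤ lam i) ∧ ∃ N, ∀ i, N ≤ i → lam i = 0

/-- The Ferrers diagram: pairs of positive integers `(i, j)` with `j ≤ lam i`. -/
def Fer (lam : ℕ → ℕ) : Set (ℕ × ℕ) := {p | 1 ≤ p.1 ∧ 1 ≤ p.2 ∧ p.2 ≤ lam p.1}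

/-- The hook length `h_λ(1,1)` of the box `(1,1)`. -/
def hook11 (lam : ℕ → ℕ) : ℕ := {p ∈ Fer lam | p.1 = 1 ∨ p.2 = 1}.ncard

/-- The `m`-th diagonal `D_m(λ)`. -/
def diag (lam : ℕ → ℕ) (m : ℤ) : Set (ℕ × ℕ) :=
  {p ∈ Fer lam | (p.1 : ℤ) - (p.2 : ℤ) + (lam 1 : ℤ) = m}

/-- The arrows of the graph `G_λ`. -/
def GArrow (lam : ℕ → ℕ) (p q : ℕ × ℕ) : Prop :=
  p ∈ Fer lam ∧ q ∈ Fer lam ∧ (q = (p.1 + 1, p.2) ∨ q = (p.1, p.2 + 1))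

/-- The order ideal of `Fer lam` generated by `uv` (the vertex set of `G_λ(m)`
when `uv` is the maximal box of the `m`-th diagonal). -/
def ideal (lam : ℕ → ℕ) (uv : ℕ × ℕ) : Set (ℕ × ℕ) := {p ∈ Fer lam | p ≤ uv}

/-! ### Fillings and reverse plane partitions -/

/-- A filling of shape `λ`. -/
def Filling (lam : ℕ → ℕ) : Type := Fer lam → ℕ

/-- Extend a filling of shape `λ` by zero to all of `ℕ × ℕ`. -/
def extendF (lam : ℕ → ℕ) (f : Filling lam) : ℕ × ℕ → ℕ :=
  Function.extend Subtype.val f (fun _ => 0)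

/-- A reverse plane partition: a filling weakly increasing for the
componentwise order. -/
def IsRPP (lam : ℕ → ℕ) (g : Filling lam) : Prop :=
  ∀ p q : Fer lam, (p : ℕ × ℕ) ≤ (q : ℕ × ℕ) → g p ≤ g q

/-- `Φ` is the map `RSK_λ` of Gansner: for every box `p` on the `m`-th diagonal,
whose maximal box is `uv`, the value of `Φ f` at `p` is the `(u_m - i + 1)`-st part
(1-indexed; `u_m - i` with our 0-indexed `GK`) of the Greene–Kleitman invariant of
`f` on `G_λ(m)`. -/
def IsGansnerRSK (lam : ℕ → ℕ) (Φ : Filling lam → Filling lam) : Prop :=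
  ∀ (f : Filling lam) (m : ℤ) (uv : ℕ × ℕ), IsGreatest (diag lam m) uv →
    ∀ p, ∀ hp : p ∈ diag lam m,
      Φ f ⟨p, hp.1⟩ = GK (ideal lam uv) (GArrow lam) (extendF lam f) (uv.1 - p.1)

/-! ### Interval bipartitions -/

/-- `(B, E)` is an interval bipartition: disjoint subsets of the positive integers
whose union is an integer interval `{i, …, j}` with `1 ≤ i ≤ j`. -/
def IsIntervalBipartition (B E : Finset ℕ) : Prop :=
  Disjoint B E ∧ ∃ i j, 1 ≤ i ∧ i ≤ j ∧ B ∪ E = Finset.Icc i j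

/-- An interval bipartition is elementary if `1 ∈ B` and `max (B ∪ E) ∈ E`. -/
def IsElementary (B E : Finset ℕ) : Prop :=
  1 ∈ B ∧ ∃ M ∈ E, ∀ x ∈ B ∪ E, x ≤ M

/-- The `i`-th smallest element (1-indexed) of a finite set of naturals
(junk value `0` out of range). -/
def nth (B : Finset ℕ) (i : ℕ) : ℕ := (B.sort (· ≤ ·)).getD (i - 1) 0

/-- The partition `λ(B, E)`: `λ(B,E)_i = #{e ∈ E | b_i < e}` for `1 ≤ i ≤ #B`,
and `0` otherwise. -/
def lamBE (B E : Finset ℕ) (i : ℕ) : ℕ :=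
  if 1 ≤ i ∧ i ≤ B.card then (E.filter (fun e => nth B i < e)).card else 0

/-! ### Symmetric groups, Coxeter elements, Auslander–Reiten quivers -/

/-- `c` lies in the copy of `S_n` inside `Equiv.Perm ℕ` permuting `{1, …, n}`. -/
def InSymm (n : ℕ) (c : Equiv.Perm ℕ) : Prop := ∀ x, x = 0 ∨ n < x → c x = x

/-- The adjacent transposition `s_i = (i, i+1)`. -/
def adjT (i : ℕ) : Equiv.Perm ℕ := Equiv.swap i (i + 1)

/-- A Coxeter element of `S_n`: a product of all of `s_1, …, s_{n-1}`, each
appearing exactly once, in some order. -/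
def IsCoxeterElement (n : ℕ) (c : Equiv.Perm ℕ) : Prop :=
  ∃ l : List ℕ, l.Perm (List.Ico 1 n) ∧ c = (l.map adjT).prod

/-- The Coxeter length of `w ∈ S_n`: the least number of adjacent transpositions
`s_1, …, s_{n-1}` needed to express `w` as a product. -/
def lenS (n : ℕ) (w : Equiv.Perm ℕ) : ℕ :=
  sInf {k | ∃ l : List ℕ, l.length = k ∧ (∀ i ∈ l, 1 ≤ i ∧ i < n) ∧ w = (l.map adjT).prod}

/-- `s_i` is initial in `w`, i.e. `ℓ(s_i w) < ℓ(w)`. -/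
def IsInitialIn (n i : ℕ) (w : Equiv.Perm ℕ) : Prop := lenS n (adjT i * w) < lenS n w

/-- `s_i` is final in `w`, i.e. `ℓ(w s_i) < ℓ(w)`. -/
def IsFinalIn (n i : ℕ) (w : Equiv.Perm ℕ) : Prop := lenS n (w * adjT i) < lenS n w

/-- The vertices of the Auslander–Reiten quiver `AR(c)`: the transpositions
`(i, j)` with `1 ≤ i < j ≤ n`. -/
def ARVertex (n : ℕ) (p : ℕ × ℕ) : Prop := 1 ≤ p.1 ∧ p.1 < p.2 ∧ p.2 ≤ n

/-- The arrows of `AR(c)`: `(i,j) → (i, c j)` whenever `i < c j`, and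
`(i,j) → (c i, j)` whenever `c i < j`. -/
def ARArrow (n : ℕ) (c : Equiv.Perm ℕ) (p q : ℕ × ℕ) : Prop :=
  ARVertex n p ∧ ARVertex n q ∧
    ((p.1 < c p.2 ∧ q = (p.1, c p.2)) ∨ (c p.1 < p.2 ∧ q = (c p.1, p.2)))

/-- The vertex set of the full subquiver `AR_m(c)`: transpositions `(i, j)`
with `i ≤ m < j`. -/
def ARmSet (n m : ℕ) : Set (ℕ × ℕ) := {p | ARVertex n p ∧ p.1 ≤ m ∧ m < p.2}

/-- The labelling of the box `(i, j)` of `Fer λ(B,E)` by the transposition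
`(b_i, e_{q-j+1})`. -/
def boxToTransp (B E : Finset ℕ) (p : ℕ × ℕ) : ℕ × ℕ :=
  (nth B p.1, nth E (E.card - p.2 + 1))

/-- `fbar` is the filling `f̄` of `AR(c)` associated to the filling `f` of shape `λ`:
`f̄(b_i, e_{q-j+1}) = f (i, j)` for boxes `(i,j) ∈ Fer λ`, and `f̄ = 0` elsewhere. -/
def IsBarOf (lam : ℕ → ℕ) (B E : Finset ℕ) (f : Filling lam) (fbar : ℕ × ℕ → ℕ) : Prop :=
  (∀ p : Fer lam, fbar (boxToTransp B E (p : ℕ × ℕ)) = f p) ∧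
  (∀ x : ℕ × ℕ, (∀ p : Fer lam, x ≠ boxToTransp B E (p : ℕ × ℕ)) → fbar x = 0)

/-- `Φ` is the map `RSK_{λ,c}`: for every box `p` on the `m`-th diagonal of `λ`,
whose maximal box is `uv`, the value of `Φ f` at `p` is the `(u_m - i + 1)`-st part
(1-indexed; `u_m - i` with our 0-indexed `GK`) of the Greene–Kleitman invariant
of `f̄` on `AR_m(c)`. -/
def IsCoxRSK (lam : ℕ → ℕ) (B E : Finset ℕ) (n : ℕ) (c : Equiv.Perm ℕ)
    (Φ : Filling lam → Filling lam) : Prop :=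
  ∀ (f : Filling lam) (fbar : ℕ × ℕ → ℕ), IsBarOf lam B E f fbar →
    ∀ m : ℕ, 1 ≤ m → m ≤ n - 1 →
      ∀ uv : ℕ × ℕ, IsGreatest (diag lam (m : ℤ)) uv →
        ∀ p, ∀ hp : p ∈ diag lam (m : ℤ),
          Φ f ⟨p, hp.1⟩ = GK (ARmSet n m) (ARArrow n c) fbar (uv.1 - p.1)

end RSKPaper

theorem List.exists_isChain_nodup_of_reflTransGen {β : Type*} {r : β → β → Prop} {a b : β}
    (h : Relation.ReflTransGen r a b) :
    ∃ m : List β, m.IsChain r ∧ m.Nodup ∧ m.head? = some a ∧ m.getLast? = some b := by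
  induction h using Relation.ReflTransGen.head_induction_on with
  | refl => exact ⟨[b], List.isChain_singleton _, List.nodup_singleton _, rfl, rfl⟩
  | @head a c hac _ ih =>
    obtain ⟨m, hchain, hnodup, hhead, hlast⟩ := ih
    by_cases ha : a ∈ m
    · obtain ⟨s, u, rfl⟩ := List.append_of_mem ha
      have hsuffix : (a :: u) <:+ s ++ a :: u := List.suffix_append s _
      refine ⟨a :: u, hchain.infix hsuffix.isInfix, hnodup.sublist hsuffix.sublist, rfl, ?_⟩
      simpa [List.getLast?_append] using hlast
    · have hm : m = c :: m.tail := List.eq_cons_of_mem_head? hhead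
      refine ⟨a :: m, ?_, List.nodup_cons.mpr ⟨ha, hnodup⟩, rfl, ?_⟩
      · rw [hm] at hchain ⊢
        exact hchain.cons_cons hac
      · rw [hm] at hlast ⊢
        simpa using hlast

theorem Finset.sum_add_sum_le_of_union_subset_of_inter_subset {ι M : Type*} [DecidableEq ι]
    [AddCommMonoid M] [PartialOrder M] [IsOrderedAddMonoid M] [CanonicallyOrderedAdd M]
    {s t s' t' : Finset ι} (hunion : s ∪ t ⊆ s' ∪ t') (hinter : s ∩ t ⊆ s' ∩ t') (f : ι → M) :
    ∑ i ∈ s, f i + ∑ i ∈ t, f i ≤ ∑ i ∈ s', f i + ∑ i ∈ t', f i := by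
  rw [← Finset.sum_union_inter, ← Finset.sum_union_inter (s₁ := s')]
  exact add_le_add (Finset.sum_le_sum_of_subset hunion) (Finset.sum_le_sum_of_subset hinter)

theorem Monotone.exists_forall_ge_eq_of_bddAbove {u : ℕ → ℕ} (hu : Monotone u)
    (hb : BddAbove (Set.range u)) : ∃ N, ∀ n, N ≤ n → u n = u N := by
  obtain ⟨N, hN⟩ := Nat.sSup_mem (Set.range_nonempty u) hb
  exact ⟨N, fun n hn => le_antisymm (hN ▸ le_csSup hb ⟨n, rfl⟩) (hu hn)⟩

namespace RSKPaper

section SignedFlows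

variable {N : Type*}

def netOut (W : Finset N) : (N → N → ℤ) →+ (N → ℤ) :=
  AddMonoidHom.mk' (fun z p => ∑ q ∈ W, (z p q - z q p)) fun z w => by
    funext p
    simp only [Pi.add_apply, ← Finset.sum_add_distrib]
    exact Finset.sum_congr rfl fun _ _ => by ring

theorem netOut_apply (W : Finset N) (z : N → N → ℤ) (p : N) :
    netOut W z p = ∑ q ∈ W, (z p q - z q p) := rfl

variable [DecidableEq N]

def arc (p q : N) : N → N → ℤ := fun a b => if a = p ∧ b = q then 1 else 0

theorem netOut_arc {W : Finset N} {p q : N} (hp : p ∈ W) (hq : q ∈ W) :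
    netOut W (arc p q) = Pi.single p 1 - Pi.single q 1 := by
  funext x
  simp only [netOut_apply, arc, ite_and, Finset.sum_sub_distrib, Finset.sum_ite_irrel,
    Finset.sum_ite_eq', hp, hq]
  simp [Pi.single_apply]

def ResidualArc (d : N → N → ℤ) (p q : N) : Prop := 1 ≤ d p q ∨ d q p ≤ -1

def orientedArc (d : N → N → ℤ) (p q : N) : N → N → ℤ :=
  if 1 ≤ d p q then arc p q else -arc q p

/-- `pathFlow 1 m` is the unit flow along the walk `m`. -/
def pathFlow (d : N → N → ℤ) : List N → N → N → ℤ
  | p :: q :: m => orientedArc d p q + pathFlow d (q :: m)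
  | _ => 0

@[simp] theorem pathFlow_nil (d : N → N → ℤ) : pathFlow d [] = 0 := rfl

@[simp] theorem pathFlow_singleton (d : N → N → ℤ) (p : N) : pathFlow d [p] = 0 := rfl

theorem pathFlow_cons_cons (d : N → N → ℤ) (p q : N) (m : List N) :
    pathFlow d (p :: q :: m) = orientedArc d p q + pathFlow d (q :: m) := rfl

theorem netOut_pathFlow {W : Finset N} (d : N → N → ℤ) :
    ∀ {m : List N} {h t : N}, m.IsChain (fun p q => p ∈ W ∧ q ∈ W) →
      m.head? = some h → m.getLast? = some t →
      netOut W (pathFlow d m) = Pi.single h 1 - Pi.single t 1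
  | [], _, _, _, hh, _ => by simp at hh
  | [p], h, t, _, hh, ht => by simp_all
  | p :: q :: m, h, t, hm, hh, ht => by
    obtain ⟨⟨hp, hq⟩, hm⟩ := List.isChain_cons_cons.mp hm
    obtain rfl : p = h := by simpa using hh
    have hstep : netOut W (orientedArc d p q) = Pi.single p 1 - Pi.single q 1 := by
      unfold orientedArc
      split_ifs
      · exact netOut_arc hp hq
      · rw [map_neg, netOut_arc hq hp, neg_sub]
    rw [pathFlow_cons_cons, map_add, hstep, netOut_pathFlow d hm rfl (by simpa using ht)]
    abel

theorem pathFlow_eq_zero_of_not_mem (d : N → N → ℤ) {a : N} :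
    ∀ {m : List N}, a ∉ m → ∀ b, pathFlow d m a b = 0 ∧ pathFlow d m b a = 0
  | [], _, _ => by simp
  | [_], _, _ => by simp
  | p :: q :: m, ha, b => by
    simp only [List.mem_cons, not_or] at ha
    obtain ⟨hap, haq, ham⟩ := ha
    have ih := pathFlow_eq_zero_of_not_mem d (a := a) (m := q :: m) (by simp [haq, ham]) b
    simp only [pathFlow_cons_cons, Pi.add_apply, ih, add_zero, orientedArc]
    split_ifs <;> simp [arc, hap, haq]

theorem mem_of_pathFlow_ne_zero {d : N → N → ℤ} {m : List N} {a b : N}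
    (h : pathFlow d m a b ≠ 0) : a ∈ m := by
  by_contra ha
  exact h (pathFlow_eq_zero_of_not_mem d ha b).1

theorem pathFlow_trichotomy (d : N → N → ℤ) :
    ∀ {m : List N}, m.IsChain (ResidualArc d) → m.Nodup → ∀ a b,
      pathFlow d m a b = 0 ∨ (pathFlow d m a b = 1 ∧ 1 ≤ d a b) ∨
        (pathFlow d m a b = -1 ∧ d a b ≤ -1)
  | [], _, _, _, _ => by simp
  | [_], _, _, _, _ => by simp
  | p :: q :: m, hm, hnd, a, b => by
    obtain ⟨hpq, hm⟩ := List.isChain_cons_cons.mp hm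
    obtain ⟨hp, hnd⟩ := List.nodup_cons.mp hnd
    have hpq' : p ≠ q := fun h => hp (h ▸ List.mem_cons_self)
    rw [pathFlow_cons_cons, Pi.add_apply, Pi.add_apply]
    by_cases hap : a = p
    · subst hap
      rw [(pathFlow_eq_zero_of_not_mem d hp b).1, add_zero]
      unfold orientedArc arc
      by_cases hbq : b = q <;> split_ifs <;> simp_all
    by_cases hbp : b = p
    · subst hbp
      rw [(pathFlow_eq_zero_of_not_mem d hp a).2, add_zero]
      unfold orientedArc arc
      unfold ResidualArc at hpq
      by_cases haq : a = q
      · subst haq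
        split_ifs with h
        · simp [hpq']
        · simp
          omega
      · split_ifs <;> simp_all
    have hzero : orientedArc d p q a b = 0 := by
      unfold orientedArc arc; split_ifs <;> simp_all
    rw [hzero, zero_add]
    exact pathFlow_trichotomy d hm hnd a b

theorem sum_netOut_nonpos_of_closed {W R : Finset N} {d : N → N → ℤ} (hRW : R ⊆ W)
    (hR : ∀ p ∈ R, ∀ q ∈ W, ResidualArc d p q → q ∈ R) : ∑ p ∈ R, netOut W d p ≤ 0 := by
  have hinside : ∑ p ∈ R, ∑ q ∈ R, (d p q - d q p) = 0 := by
    simp only [Finset.sum_sub_distrib]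
    rw [sub_eq_zero]
    exact Finset.sum_comm
  have hboundary : ∑ p ∈ R, ∑ q ∈ W \ R, (d p q - d q p) ≤ 0 := by
    refine Finset.sum_nonpos fun p hp => Finset.sum_nonpos fun q hq => ?_
    obtain ⟨hqW, hqR⟩ := Finset.mem_sdiff.mp hq
    have : ¬ ResidualArc d p q := fun hpq => hqR (hR p hp q hqW hpq)
    simp only [ResidualArc, not_or] at this
    omega
  calc ∑ p ∈ R, netOut W d p
      = ∑ p ∈ R, ∑ q ∈ W \ R, (d p q - d q p) + ∑ p ∈ R, ∑ q ∈ R, (d p q - d q p) := by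
        simp only [netOut_apply, ← Finset.sum_add_distrib, Finset.sum_sdiff hRW]
    _ ≤ 0 := by omega

structure IsAugmentingPath (W : Finset N) (P : N → Prop) (d : N → N → ℤ) (h t : N) (m : List N) :
    Prop where
  isChain : m.IsChain (ResidualArc d)
  nodup : m.Nodup
  head : m.head? = some h
  last : m.getLast? = some t
  source : h ∈ W ∧ P h ∧ 1 ≤ netOut W d h
  sink : ¬ P t ∧ netOut W d t ≤ -1

theorem exists_isAugmentingPath {W : Finset N} (P : N → Prop) [DecidablePred P] {d : N → N → ℤ}
    (hpos : 1 ≤ ∑ p ∈ W with P p, netOut W d p) : ∃ h t m, IsAugmentingPath W P d h t m := by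
  classical
  set R := W.filter fun p => ∃ h ∈ W, P h ∧ 1 ≤ netOut W d h ∧
    Relation.ReflTransGen (ResidualArc d) h p with hR
  clear_value R
  -- `R` is closed under residual arcs, so its net outflow is `≤ 0`; without a deficit sink it
  -- would be at least the surplus `hpos` of its sources.
  obtain ⟨t, htR, htP, ht⟩ : ∃ t ∈ R, ¬ P t ∧ netOut W d t ≤ -1 := by
    by_contra! hsink
    have hcut : ∑ p ∈ R, netOut W d p ≤ 0 :=
      sum_netOut_nonpos_of_closed (hR ▸ Finset.filter_subset _ _) fun p hp q hq hpq => by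
        rw [hR, Finset.mem_filter] at hp ⊢
        obtain ⟨-, h, hhW, hPh, hh, hhp⟩ := hp
        exact ⟨hq, h, hhW, hPh, hh, hhp.tail hpq⟩
    have hle : ∑ p ∈ W with P p, netOut W d p ≤ ∑ p ∈ R, netOut W d p := by
      have hRW : W ∩ R = R := Finset.inter_eq_right.mpr (hR ▸ Finset.filter_subset _ _)
      rw [Finset.sum_filter, ← hRW, ← Finset.sum_ite_mem]
      refine Finset.sum_le_sum fun p hpW => ?_
      by_cases hpR : p ∈ R
      · have := hsink p hpR
        split_ifs with hP
        · exact le_rfl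
        · have := this hP; omega
      · have : ¬ (P p ∧ 1 ≤ netOut W d p) := fun h =>
          hpR (hR ▸ Finset.mem_filter.mpr ⟨hpW, p, hpW, h.1, h.2, .refl⟩)
        split_ifs with hP
        · exact not_lt.mp fun h => this ⟨hP, h⟩
        · exact le_rfl
    omega
  obtain ⟨-, h, hhW, hPh, hh, hht⟩ := Finset.mem_filter.mp (hR ▸ htR)
  obtain ⟨m, hchain, hnodup, hhead, hlast⟩ := List.exists_isChain_nodup_of_reflTransGen hht
  exact ⟨h, t, m, hchain, hnodup, hhead, hlast, ⟨hhW, hPh, hh⟩, htP, ht⟩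

theorem IsAugmentingPath.netOut_pathFlow_eq {W : Finset N} {P : N → Prop} {d : N → N → ℤ}
    {h t : N} {m : List N} (hm : IsAugmentingPath W P d h t m)
    (hd : ∀ p q, d p q ≠ 0 → p ∈ W ∧ q ∈ W) :
    netOut W (pathFlow d m) = Pi.single h 1 - Pi.single t 1 := by
  refine netOut_pathFlow d (hm.isChain.imp fun p q hpq => ?_) hm.head hm.last
  rcases hpq with hpq | hpq
  · exact hd p q (by omega)
  · exact (hd q p (by omega)).symm

theorem orientedArc_one (p q : N) : orientedArc 1 p q = arc p q := by
  simp [orientedArc]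

theorem pathFlow_one_nonneg : ∀ (m : List N) (a b : N), 0 ≤ pathFlow 1 m a b
  | [], _, _ => le_rfl
  | [_], _, _ => le_rfl
  | p :: q :: m, a, b => by
    rw [pathFlow_cons_cons, orientedArc_one, Pi.add_apply, Pi.add_apply]
    have := pathFlow_one_nonneg (q :: m) a b
    unfold arc
    split_ifs <;> omega

theorem pathFlow_one_le_cons (p : N) : ∀ (m : List N) (a b : N),
    pathFlow 1 m a b ≤ pathFlow 1 (p :: m) a b
  | [], _, _ => le_rfl
  | q :: m, a, b => by
    rw [pathFlow_cons_cons, orientedArc_one, Pi.add_apply, Pi.add_apply]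
    unfold arc
    split_ifs <;> omega

theorem rel_of_pathFlow_one_ne_zero {R : N → N → Prop} :
    ∀ {m : List N}, m.IsChain R → ∀ {a b : N}, pathFlow 1 m a b ≠ 0 → R a b
  | [], _, _, _, h => absurd rfl h
  | [_], _, _, _, h => absurd rfl h
  | p :: q :: m, hm, a, b, h => by
    obtain ⟨hpq, hm⟩ := List.isChain_cons_cons.mp hm
    rw [pathFlow_cons_cons, orientedArc_one, Pi.add_apply, Pi.add_apply] at h
    by_cases hab : a = p ∧ b = q
    · exact hab.1 ▸ hab.2 ▸ hpq
    · simp only [arc, if_neg hab, zero_add] at h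
      exact rel_of_pathFlow_one_ne_zero hm h

end SignedFlows

section SplitGraph

variable {α : Type*} {S : Finset α} {A : α → α → Prop}

inductive SplitArc (V : Set α) (A : α → α → Prop) : α × Bool → α × Bool → Prop
  | through {v : α} : v ∈ V → SplitArc V A (v, false) (v, true)
  | step {u v : α} : A u v → SplitArc V A (u, true) (v, false)

def splitNodes (S : Finset α) : Finset (α × Bool) := S ×ˢ Finset.univ

@[simp] theorem mem_splitNodes {p : α × Bool} : p ∈ splitNodes S ↔ p.1 ∈ S := by
  simp [splitNodes]

theorem SplitArc.mem_splitNodes (hA : ∀ p q, A p q → p ∈ S ∧ q ∈ S)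
    {p q : α × Bool} (h : SplitArc S A p q) : p ∈ splitNodes S ∧ q ∈ splitNodes S := by
  cases h with
  | through hv => simpa using hv
  | step huv => simpa using hA _ _ huv

/-- `(v, false)` and `(v, true)` are the in- and out-copy of the vertex `v`: net flow may be
created only at in-copies and absorbed only at out-copies, so that a flow of value `k` is a sum
of `k` paths, and `cover` is the set of vertices these paths visit. -/
structure IsFlow (S : Finset α) (A : α → α → Prop) (z : α × Bool → α × Bool → ℤ) : Prop where
  nonneg : ∀ p q, 0 ≤ z p q
  splitArc_of_ne_zero : ∀ p q, z p q ≠ 0 → SplitArc S A p q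
  source : ∀ v, 0 ≤ netOut (splitNodes S) z (v, false)
  sink : ∀ v, netOut (splitNodes S) z (v, true) ≤ 0

def flowValue (S : Finset α) (z : α × Bool → α × Bool → ℤ) : ℤ :=
  ∑ p ∈ splitNodes S with p.2 = false, netOut (splitNodes S) z p

def cover (S : Finset α) (z : α × Bool → α × Bool → ℤ) : Finset α :=
  S.filter fun v => 1 ≤ z (v, false) (v, true)

theorem IsFlow.zero : IsFlow S A 0 where
  nonneg _ _ := le_rfl
  splitArc_of_ne_zero _ _ h := absurd rfl h
  source _ := by simp
  sink _ := by simp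

theorem IsFlow.add {z w : α × Bool → α × Bool → ℤ} (hz : IsFlow S A z) (hw : IsFlow S A w) :
    IsFlow S A (z + w) where
  nonneg p q := add_nonneg (hz.nonneg p q) (hw.nonneg p q)
  splitArc_of_ne_zero p q h := by
    by_cases hzpq : z p q = 0
    · exact hw.splitArc_of_ne_zero p q (by simpa [hzpq] using h)
    · exact hz.splitArc_of_ne_zero p q hzpq
  source v := by simpa using add_nonneg (hz.source v) (hw.source v)
  sink v := by simpa using add_nonpos (hz.sink v) (hw.sink v)

theorem IsFlow.splitArc_of_sub_ne_zero {zF zG : α × Bool → α × Bool → ℤ}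
    (hF : IsFlow S A zF) (hG : IsFlow S A zG)
    {p q : α × Bool} (h : (zF - zG) p q ≠ 0) : SplitArc S A p q := by
  by_cases hFpq : zF p q = 0
  · exact hG.splitArc_of_ne_zero p q (by simpa [hFpq] using h)
  · exact hF.splitArc_of_ne_zero p q hFpq

@[simp] theorem flowValue_zero : flowValue S 0 = 0 := by simp [flowValue]

theorem flowValue_add (z w : α × Bool → α × Bool → ℤ) :
    flowValue S (z + w) = flowValue S z + flowValue S w := by
  simp [flowValue, Finset.sum_add_distrib]

theorem flowValue_sub (z w : α × Bool → α × Bool → ℤ) :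
    flowValue S (z - w) = flowValue S z - flowValue S w := by
  simp [flowValue, Finset.sum_sub_distrib]

def splitPath (l : List α) : List (α × Bool) := l.flatMap fun v => [(v, false), (v, true)]

theorem splitPath_cons (v : α) (l : List α) :
    splitPath (v :: l) = (v, false) :: (v, true) :: splitPath l := rfl

theorem isChain_splitPath : ∀ {l : List α}, (∀ v ∈ l, v ∈ S) → l.IsChain A →
    (splitPath l).IsChain (SplitArc S A)
  | [], _, _ => List.isChain_nil
  | [v], hl, _ => by simpa [splitPath] using SplitArc.through (A := A) (hl v (by simp))
  | u :: v :: l, hl, hch => by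
    obtain ⟨huv, hch⟩ := List.isChain_cons_cons.mp hch
    have ih := isChain_splitPath (fun x hx => hl x (List.mem_cons_of_mem _ hx)) hch
    rw [splitPath_cons] at ih
    rw [splitPath_cons, splitPath_cons]
    exact .cons_cons (.through (hl u (by simp))) (.cons_cons (.step huv) ih)

theorem splitPath_head? {l : List α} {u : α} (h : l.head? = some u) :
    (splitPath l).head? = some (u, false) := by
  cases l <;> simp_all [splitPath_cons]

theorem splitPath_getLast? : ∀ {l : List α} {w : α}, l.getLast? = some w →
    (splitPath l).getLast? = some (w, true)
  | [], _, h => by simp at h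
  | [v], _, h => by simp_all [splitPath]
  | u :: v :: l, w, h => by
    rw [splitPath_cons, splitPath_cons, List.getLast?_cons_cons, List.getLast?_cons_cons,
      ← splitPath_cons]
    exact splitPath_getLast? (by simpa using h)

open Classical in
def rank (S : Finset α) (A : α → α → Prop) (v : α) : ℕ :=
  (S.filter fun u => Relation.TransGen A u v).card

theorem rank_lt (hA : ∀ p q, A p q → p ∈ S ∧ q ∈ S)
    (hacyclic : ∀ v, ¬ Relation.TransGen A v v) {u v : α} (huv : A u v) :
    rank S A u < rank S A v := by
  refine Finset.card_lt_card ((Finset.ssubset_iff_of_subset fun x hx => ?_).mpr ⟨u, ?_, ?_⟩)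
  · simp only [Finset.mem_filter] at hx ⊢
    exact ⟨hx.1, hx.2.tail huv⟩
  · simpa using ⟨(hA u v huv).1, Relation.TransGen.single huv⟩
  · simpa using fun _ => hacyclic u

def splitRank (S : Finset α) (A : α → α → Prop) (p : α × Bool) : ℕ :=
  2 * rank S A p.1 + if p.2 then 1 else 0

theorem splitRank_lt (hA : ∀ p q, A p q → p ∈ S ∧ q ∈ S)
    (hacyclic : ∀ v, ¬ Relation.TransGen A v v) {p q : α × Bool} (h : SplitArc S A p q) :
    splitRank S A p < splitRank S A q := by
  cases h with
  | through => simp [splitRank]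
  | step huv =>
    have := rank_lt hA hacyclic huv
    simp only [splitRank, if_true, Bool.false_eq_true, if_false]
    omega

theorem IsFlow.eq_zero_of_flowValue_eq_zero
    (hA : ∀ p q, A p q → p ∈ S ∧ q ∈ S) (hacyclic : ∀ v, ¬ Relation.TransGen A v v)
    {z : α × Bool → α × Bool → ℤ}
    (hz : IsFlow S A z) (h0 : flowValue S z = 0) (p q : α × Bool) : z p q = 0 := by
  -- An arc of minimal rank carrying flow leaves a node without inflow, i.e. a net source;
  -- but a flow of value `0` has none.
  by_contra hpq
  obtain ⟨⟨a, b⟩, hab, hmin⟩ := Finset.exists_min_image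
    ((splitNodes S ×ˢ splitNodes S).filter fun e => z e.1 e.2 ≠ 0) (fun e => splitRank S A e.1)
    ⟨(p, q), by simpa [hpq] using (hz.splitArc_of_ne_zero p q hpq).mem_splitNodes hA⟩
  simp only [Finset.mem_filter, Finset.mem_product] at hab
  obtain ⟨⟨haW, hbW⟩, hab⟩ := hab
  have hin : ∀ c ∈ splitNodes S, z c a = 0 := fun c hc => by
    by_contra hca
    have := hmin (c, a) (by simp [hc, haW, hca])
    dsimp only at this
    have := splitRank_lt hA hacyclic (hz.splitArc_of_ne_zero c a hca)
    omega
  have hout : 0 < netOut (splitNodes S) z a := by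
    rw [netOut_apply, Finset.sum_congr rfl fun c hc => by rw [hin c hc, sub_zero]]
    exact lt_of_lt_of_le (lt_of_le_of_ne (hz.nonneg a b) (Ne.symm hab))
      (Finset.single_le_sum (fun c _ => hz.nonneg a c) hbW)
  obtain ⟨v, _ | _⟩ := a
  · have := (Finset.sum_eq_zero_iff_of_nonneg fun p hp => ?_).mp h0 (v, false) (by simpa using haW)
    · omega
    · obtain ⟨w, _ | _⟩ := p
      · exact hz.source w
      · simp at hp
  · exact absurd (hz.sink v) (not_le.mpr hout)

theorem exists_isPath_of_isChain_splitArc {V : Set α} :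
    ∀ (m : List (α × Bool)) {u w : α}, ((u, false) :: m).IsChain (SplitArc V A) →
      ((u, false) :: m).getLast? = some (w, true) →
      ∃ l, IsPath V A l ∧ l.head? = some u ∧ ∀ v, (v, false) ∈ (u, false) :: m → v ∈ l
  | [], _, _, _, ht => by simp at ht
  | [y], u, _, hm, _ => by
    obtain ⟨hy, -⟩ := List.isChain_cons_cons.mp hm
    cases hy with
    | through hu =>
      refine ⟨[u], ⟨List.cons_ne_nil _ _, by simpa using hu, List.isChain_singleton _⟩, rfl, ?_⟩
      simp
  | y :: z :: m, u, w, hm, ht => by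
    obtain ⟨hy, hz, htail⟩ := List.isChain_cons_cons.mp hm |>.imp_right List.isChain_cons_cons.mp
    cases hy with
    | through hu =>
    cases hz with
    | @step _ u' huu' =>
    obtain ⟨l, ⟨hne, hlV, hl⟩, hlh, hcov⟩ :=
      exists_isPath_of_isChain_splitArc m htail (by simpa using ht)
    refine ⟨u :: l, ⟨List.cons_ne_nil _ _, ?_, ?_⟩, rfl, fun v hv => ?_⟩
    · simpa [hu] using hlV
    · obtain ⟨u'', l', rfl⟩ := List.exists_cons_of_ne_nil hne
      obtain rfl : u'' = u' := by simpa using hlh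
      exact hl.cons_cons huu'
    · by_cases hvu : v = u
      · simp [hvu]
      · exact List.mem_cons_of_mem _ (hcov v (by simpa [hvu] using hv))

theorem isPath_singleton {V : Set α} {v : α} (hv : v ∈ V) : IsPath V A [v] :=
  ⟨List.cons_ne_nil _ _, by simpa using hv, List.isChain_singleton _⟩

end SplitGraph

section Flows

variable {α : Type*} [DecidableEq α] {S : Finset α} {A : α → α → Prop}


theorem sum_single_sub_single {u w : α} (hu : u ∈ S) :
    ∑ p ∈ splitNodes S with p.2 = false,
      (Pi.single (u, false) 1 - Pi.single (w, true) 1 : α × Bool → ℤ) p = 1 := by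
  simp [Finset.sum_sub_distrib, Pi.single_apply, hu]

theorem one_le_pathFlow_splitPath {v : α} : ∀ {l : List α}, v ∈ l →
    1 ≤ pathFlow 1 (splitPath l) (v, false) (v, true)
  | u :: l, hv => by
    rw [splitPath_cons, pathFlow_cons_cons, orientedArc_one, Pi.add_apply, Pi.add_apply]
    rcases List.mem_cons.mp hv with rfl | hv
    · have := pathFlow_one_nonneg ((v, true) :: splitPath l) (v, false) (v, true)
      simp only [arc, and_self, if_true]
      omega
    · have := one_le_pathFlow_splitPath hv
      have := pathFlow_one_le_cons (u, true) (splitPath l) (v, false) (v, true)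
      have : 0 ≤ arc (u, false) (u, true) (v, false) (v, true) := by unfold arc; split_ifs <;> simp
      omega

theorem isFlow_pathFlow_splitPath (hA : ∀ p q, A p q → p ∈ S ∧ q ∈ S)
    {l : List α} (hl : IsPath S A l) :
    IsFlow S A (pathFlow 1 (splitPath l)) ∧ flowValue S (pathFlow 1 (splitPath l)) = 1 := by
  obtain ⟨hne, hlS, hch⟩ := hl
  have hu := List.head?_eq_some_head hne
  have hw := List.getLast?_eq_some_getLast hne
  have hchain := isChain_splitPath hlS hch
  have hnet := netOut_pathFlow 1 (hchain.imp fun {_ _} h => h.mem_splitNodes hA)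
    (splitPath_head? hu) (splitPath_getLast? hw)
  refine ⟨⟨pathFlow_one_nonneg _, fun p q => rel_of_pathFlow_one_ne_zero hchain, fun v => ?_,
    fun v => ?_⟩, ?_⟩
  · rw [hnet]; simp [Pi.single_apply]; split_ifs <;> simp
  · rw [hnet]; simp [Pi.single_apply]; split_ifs <;> simp
  · rw [flowValue, hnet]
    exact sum_single_sub_single (hlS _ (List.head_mem hne))

def tupleSupport {k : ℕ} (γ : Fin k → List α) : Finset α :=
  Finset.univ.biUnion fun i => (γ i).toFinset

@[simp] theorem mem_tupleSupport {k : ℕ} {γ : Fin k → List α} {v : α} :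
    v ∈ tupleSupport γ ↔ ∃ i, v ∈ γ i := by
  simp [tupleSupport]

theorem exists_isFlow_of_paths (hA : ∀ p q, A p q → p ∈ S ∧ q ∈ S) :
    ∀ {k : ℕ} (γ : Fin k → List α), (∀ i, IsPath S A (γ i)) →
      ∃ z, IsFlow S A z ∧ flowValue S z = k ∧ tupleSupport γ ⊆ cover S z
  | 0, γ, _ => ⟨0, .zero, by simp, by simp [tupleSupport]⟩
  | k + 1, γ, hγ => by
    obtain ⟨z, hz, hzk, hcov⟩ := exists_isFlow_of_paths hA (fun i => γ i.succ) fun i => hγ _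
    obtain ⟨hflow, hval⟩ := isFlow_pathFlow_splitPath hA (hγ 0)
    refine ⟨_ + z, hflow.add hz, by rw [flowValue_add, hval, hzk]; push_cast; ring, ?_⟩
    intro v hv
    obtain ⟨i, hvi⟩ := mem_tupleSupport.mp hv
    have hvS : v ∈ S := (hγ i).2.1 v hvi
    have h0 := pathFlow_one_nonneg (splitPath (γ 0)) (v, false) (v, true)
    have h1 := hz.nonneg (v, false) (v, true)
    refine Finset.mem_filter.mpr ⟨hvS, ?_⟩
    rw [Pi.add_apply, Pi.add_apply]
    cases i using Fin.cases with
    | zero => have := one_le_pathFlow_splitPath hvi; omega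
    | succ j =>
      have := (Finset.mem_filter.mp (hcov (mem_tupleSupport.mpr ⟨j, hvi⟩))).2
      omega

theorem IsFlow.of_netOut_eq_sub {z z' : α × Bool → α × Bool → ℤ} {u w : α}
    (hz : IsFlow S A z) (hnonneg : ∀ p q, 0 ≤ z' p q)
    (hsupp : ∀ p q, z' p q ≠ 0 → SplitArc S A p q)
    (hu : 1 ≤ netOut (splitNodes S) z (u, false)) (hw : netOut (splitNodes S) z (w, true) ≤ -1)
    (hnet : netOut (splitNodes S) z' =
      netOut (splitNodes S) z - (Pi.single (u, false) 1 - Pi.single (w, true) 1)) :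
    IsFlow S A z' where
  nonneg := hnonneg
  splitArc_of_ne_zero := hsupp
  source v := by
    by_cases hv : v = u
    · subst hv; simp [hnet]; omega
    · simpa [hnet, hv] using hz.source v
  sink v := by
    by_cases hv : v = w
    · subst hv; simp [hnet]; omega
    · simpa [hnet, hv] using hz.sink v

theorem IsFlow.of_netOut_eq_add {z z' : α × Bool → α × Bool → ℤ} {u w : α}
    (hz : IsFlow S A z) (hnonneg : ∀ p q, 0 ≤ z' p q)
    (hsupp : ∀ p q, z' p q ≠ 0 → SplitArc S A p q)
    (hnet : netOut (splitNodes S) z' =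
      netOut (splitNodes S) z + (Pi.single (u, false) 1 - Pi.single (w, true) 1)) :
    IsFlow S A z' where
  nonneg := hnonneg
  splitArc_of_ne_zero := hsupp
  source v := by
    have := hz.source v
    by_cases hv : v = u
    · subst hv; simp [hnet]; omega
    · simpa [hnet, hv] using this
  sink v := by
    have := hz.sink v
    by_cases hv : v = w
    · subst hv; simp [hnet]; omega
    · simpa [hnet, hv] using this

theorem IsFlow.exchange (hA : ∀ p q, A p q → p ∈ S ∧ q ∈ S)
    {zF zG : α × Bool → α × Bool → ℤ} (hF : IsFlow S A zF) (hG : IsFlow S A zG)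
    {h t : α × Bool} {m : List (α × Bool)}
    (hm : IsAugmentingPath (splitNodes S) (·.2 = false) (zF - zG) h t m) :
    IsFlow S A (zF - pathFlow (zF - zG) m) ∧ IsFlow S A (zG + pathFlow (zF - zG) m) ∧
      flowValue S (pathFlow (zF - zG) m) = 1 := by
  obtain ⟨u, b⟩ := h
  obtain ⟨w, b'⟩ := t
  obtain ⟨huS, rfl : b = false, hsrc⟩ := hm.source
  obtain ⟨hb', hsnk⟩ := hm.sink
  obtain rfl : b' = true := by simpa using hb'
  set Δ := pathFlow (zF - zG) m
  have hnet : netOut (splitNodes S) Δ = Pi.single (u, false) 1 - Pi.single (w, true) 1 :=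
    hm.netOut_pathFlow_eq fun p q hpq => (hF.splitArc_of_sub_ne_zero hG hpq).mem_splitNodes hA
  have htri : ∀ p q, Δ p q = 0 ∨ (Δ p q = 1 ∧ 1 ≤ zF p q - zG p q) ∨
      (Δ p q = -1 ∧ zF p q - zG p q ≤ -1) :=
    pathFlow_trichotomy _ hm.isChain hm.nodup
  have hsupp (z : α × Bool → α × Bool → ℤ) (hz : IsFlow S A z) (p q)
      (hpq : z p q ≠ 0 ∨ Δ p q ≠ 0) : SplitArc S A p q := by
    refine hpq.elim (hz.splitArc_of_ne_zero p q) fun hΔ => hF.splitArc_of_sub_ne_zero hG ?_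
    rw [Pi.sub_apply, Pi.sub_apply]
    rcases htri p q with h | h | h <;> omega
  simp only [map_sub, Pi.sub_apply] at hsrc hsnk
  have := hG.source u
  have := hG.sink w
  refine ⟨hF.of_netOut_eq_sub (u := u) (w := w) (fun p q => ?_)
    (fun p q hpq => hsupp zF hF p q ?_) (by omega) (by omega) (by rw [map_sub, hnet]),
    hG.of_netOut_eq_add (u := u) (w := w) (fun p q => ?_) (fun p q hpq => hsupp zG hG p q ?_)
    (by rw [map_add, hnet]), ?_⟩
  · have := hF.nonneg p q
    have := hG.nonneg p q
    show 0 ≤ zF p q - Δ p q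
    rcases htri p q with h | h | h <;> omega
  · by_contra! h
    exact hpq (by simp [h.1, h.2])
  · have := hF.nonneg p q
    have := hG.nonneg p q
    show 0 ≤ zG p q + Δ p q
    rcases htri p q with h | h | h <;> omega
  · by_contra! h
    exact hpq (by simp [h.1, h.2])
  · rw [flowValue, hnet]
    exact sum_single_sub_single (mem_splitNodes.mp huS)

theorem IsFlow.exists_paths (hA : ∀ p q, A p q → p ∈ S ∧ q ∈ S)
    (hacyclic : ∀ v, ¬ Relation.TransGen A v v) :
    ∀ (k : ℕ) {z : α × Bool → α × Bool → ℤ}, IsFlow S A z → flowValue S z = k →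
      ∃ γ : Fin k → List α, (∀ i, IsPath S A (γ i)) ∧ cover S z ⊆ tupleSupport γ
  | 0, z, hz, hk => by
    refine ⟨Fin.elim0, fun i => i.elim0, fun v hv => ?_⟩
    have := (Finset.mem_filter.mp hv).2
    rw [hz.eq_zero_of_flowValue_eq_zero hA hacyclic (by exact_mod_cast hk)] at this
    omega
  | k + 1, z, hz, hk => by
    obtain ⟨⟨u, b⟩, ⟨w, b'⟩, m, hm⟩ :=
      exists_isAugmentingPath (W := splitNodes S) (·.2 = false) (d := z)
        (by rw [← flowValue, hk]; omega)
    obtain rfl : b = false := hm.source.2.1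
    obtain rfl : b' = true := by simpa using hm.sink.1
    obtain ⟨hz', -, hval⟩ := hz.exchange hA .zero (zG := 0) (by rwa [sub_zero])
    rw [sub_zero] at hz' hval
    obtain ⟨γ, hγ, hcov⟩ :=
      exists_paths hA hacyclic k hz' (by rw [flowValue_sub, hk, hval]; push_cast; ring)
    obtain ⟨m, rfl⟩ : ∃ m', m = (u, false) :: m' := by
      have := hm.head
      cases m with
      | nil => simp at this
      | cons x m' => exact ⟨m', by simpa using this⟩
    have hchain : ((u, false) :: m).IsChain (SplitArc S A) :=
      hm.isChain.imp fun p q hpq => hz.splitArc_of_ne_zero p q <| by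
        have := hz.nonneg q p
        rcases hpq with hpq | hpq <;> omega
    obtain ⟨l, hl, -, hlcov⟩ := exists_isPath_of_isChain_splitArc m hchain hm.last
    refine ⟨Fin.cons l γ, Fin.cases hl hγ, fun v hv => ?_⟩
    obtain ⟨hvS, hv⟩ := Finset.mem_filter.mp hv
    by_cases hΔ : pathFlow z ((u, false) :: m) (v, false) (v, true) = 0
    · obtain ⟨i, hi⟩ := mem_tupleSupport.mp <| hcov <| Finset.mem_filter.mpr
        ⟨hvS, by rw [Pi.sub_apply, Pi.sub_apply, hΔ]; omega⟩
      exact mem_tupleSupport.mpr ⟨i.succ, by simpa using hi⟩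
    · exact mem_tupleSupport.mpr ⟨0, by simpa using hlcov v (mem_of_pathFlow_ne_zero hΔ)⟩

theorem IsFlow.exists_exchange (hA : ∀ p q, A p q → p ∈ S ∧ q ∈ S)
    {zF zG : α × Bool → α × Bool → ℤ} (hF : IsFlow S A zF) (hG : IsFlow S A zG)
    (hlt : flowValue S zG < flowValue S zF) :
    ∃ zF' zG', IsFlow S A zF' ∧ IsFlow S A zG' ∧
      flowValue S zF' = flowValue S zF - 1 ∧ flowValue S zG' = flowValue S zG + 1 ∧
      cover S zF ∪ cover S zG ⊆ cover S zF' ∪ cover S zG' ∧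
      cover S zF ∩ cover S zG ⊆ cover S zF' ∩ cover S zG' := by
  obtain ⟨h, t, m, hm⟩ := exists_isAugmentingPath (W := splitNodes S) (·.2 = false)
    (d := zF - zG) (by rw [← flowValue, flowValue_sub]; omega)
  obtain ⟨hF', hG', hval⟩ := hF.exchange hA hG hm
  -- The path keeps `zF + zG` and moves a unit only where `zF` and `zG` differ by at least one,
  -- so `min zF zG` does not decrease on any arc.
  refine ⟨_, _, hF', hG', by rw [flowValue_sub, hval], by rw [flowValue_add, hval], ?_, ?_⟩ <;>
  · simp only [cover, ← Finset.filter_or, ← Finset.filter_and]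
    refine Finset.monotone_filter_right _ fun v hv => ?_
    have htri := pathFlow_trichotomy _ hm.isChain hm.nodup (v, false) (v, true)
    have := hF.nonneg (v, false) (v, true)
    have := hG.nonneg (v, false) (v, true)
    simp only [Pi.sub_apply, Pi.add_apply] at hv htri ⊢
    omega

end Flows

section GreeneKleitman

variable {α : Type*} [DecidableEq α] {S : Finset α} {A : α → α → Prop} (f : α → ℕ)

theorem wt_le_sum {k : ℕ} {γ : Fin k → List α} (hγ : ∀ i, IsPath S A (γ i)) :
    wt f γ ≤ ∑ v ∈ S, f v :=
  Finset.sum_le_sum_of_subset fun v hv => by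
    obtain ⟨i, hvi⟩ := mem_tupleSupport.mp hv
    exact (hγ i).2.1 v hvi

theorem bddAbove_wt (ℓ : ℕ) :
    BddAbove {w | ∃ γ : Fin ℓ → List α, (∀ i, IsPath S A (γ i)) ∧ w = wt f γ} :=
  ⟨∑ v ∈ S, f v, by rintro _ ⟨γ, hγ, rfl⟩; exact wt_le_sum f hγ⟩

theorem wt_le_MGK {ℓ : ℕ} {γ : Fin ℓ → List α} (hγ : ∀ i, IsPath S A (γ i)) :
    wt f γ ≤ MGK S A f ℓ :=
  le_csSup (bddAbove_wt f ℓ) ⟨γ, hγ, rfl⟩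

theorem MGK_le_sum (ℓ : ℕ) : MGK S A f ℓ ≤ ∑ v ∈ S, f v :=
  csSup_le' fun _ ⟨_, hγ, hw⟩ => hw ▸ wt_le_sum f hγ

theorem exists_wt_eq_MGK (hS : S.Nonempty) (ℓ : ℕ) :
    ∃ γ : Fin ℓ → List α, (∀ i, IsPath S A (γ i)) ∧ MGK S A f ℓ = wt f γ := by
  obtain ⟨v, hv⟩ := hS
  exact Nat.sSup_mem (s := {w | ∃ γ : Fin ℓ → List α, (∀ i, IsPath S A (γ i)) ∧ w = wt f γ})
    ⟨_, fun _ => [v], fun _ => isPath_singleton hv, rfl⟩ (bddAbove_wt f ℓ)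

theorem MGK_le_MGK_succ (ℓ : ℕ) : MGK S A f ℓ ≤ MGK S A f (ℓ + 1) := by
  rcases S.eq_empty_or_nonempty with rfl | ⟨v, hv⟩
  · have := MGK_le_sum (S := ∅) (A := A) f ℓ
    rw [Finset.sum_empty] at this
    omega
  obtain ⟨γ, hγ, hM⟩ := exists_wt_eq_MGK f ⟨v, hv⟩ ℓ
  calc MGK S A f ℓ = wt f γ := hM
    _ ≤ wt f (Fin.cons [v] γ : Fin (ℓ + 1) → List α) :=
      Finset.sum_le_sum_of_subset fun x hx => by
        obtain ⟨i, hi⟩ := mem_tupleSupport.mp hx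
        exact mem_tupleSupport.mpr ⟨i.succ, by simpa using hi⟩
    _ ≤ MGK S A f (ℓ + 1) := wt_le_MGK f (Fin.cases (isPath_singleton hv) hγ)

theorem MGK_concave (hA : ∀ p q, A p q → p ∈ S ∧ q ∈ S)
    (hacyclic : ∀ v, ¬ Relation.TransGen A v v) (ℓ : ℕ) :
    MGK S A f (ℓ + 2) + MGK S A f ℓ ≤ 2 * MGK S A f (ℓ + 1) := by
  rcases S.eq_empty_or_nonempty with rfl | hS
  · have h₁ := MGK_le_sum (S := ∅) (A := A) f (ℓ + 2)
    have h₂ := MGK_le_sum (S := ∅) (A := A) f ℓ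
    rw [Finset.sum_empty] at h₁ h₂
    omega
  obtain ⟨γ, hγ, hMγ⟩ := exists_wt_eq_MGK f hS (ℓ + 2)
  obtain ⟨δ, hδ, hMδ⟩ := exists_wt_eq_MGK f hS ℓ
  obtain ⟨zF, hF, hFval, hγF⟩ := exists_isFlow_of_paths hA γ hγ
  obtain ⟨zG, hG, hGval, hδG⟩ := exists_isFlow_of_paths hA δ hδ
  obtain ⟨zF', zG', hF', hG', hF'val, hG'val, hunion, hinter⟩ :=
    hF.exists_exchange hA hG (by rw [hFval, hGval]; push_cast; omega)
  obtain ⟨γ', hγ', hF'γ'⟩ :=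
    hF'.exists_paths hA hacyclic (ℓ + 1) (by rw [hF'val, hFval]; push_cast; ring)
  obtain ⟨δ', hδ', hG'δ'⟩ :=
    hG'.exists_paths hA hacyclic (ℓ + 1) (by rw [hG'val, hGval]; push_cast; ring)
  calc MGK S A f (ℓ + 2) + MGK S A f ℓ = wt f γ + wt f δ := by rw [hMγ, hMδ]
    _ ≤ ∑ v ∈ cover S zF, f v + ∑ v ∈ cover S zG, f v :=
      add_le_add (Finset.sum_le_sum_of_subset hγF) (Finset.sum_le_sum_of_subset hδG)
    _ ≤ ∑ v ∈ cover S zF', f v + ∑ v ∈ cover S zG', f v :=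
      Finset.sum_add_sum_le_of_union_subset_of_inter_subset hunion hinter f
    _ ≤ wt f γ' + wt f δ' :=
      add_le_add (Finset.sum_le_sum_of_subset hF'γ') (Finset.sum_le_sum_of_subset hG'δ')
    _ ≤ 2 * MGK S A f (ℓ + 1) := by
      have := wt_le_MGK f hγ'
      have := wt_le_MGK f hδ'
      omega

end GreeneKleitman

/-- For a finite acyclic directed graph `G = (V, A)` without multiple
arrows and a filling `f` of `G`, the Greene–Kleitman invariant `GK_G(f)` is weakly
decreasing with finitely many nonzero terms (an integer partition); equivalently,
`ℓ ↦ M_ℓ^G(f)` is monotone, concave, and eventually constant. -/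
theorem GK_isPartition {α : Type*} [DecidableEq α] (V : Set α) (A : α → α → Prop)
    (hVfin : V.Finite) (hA : ∀ p q, A p q → p ∈ V ∧ q ∈ V)
    (hacyclic : ∀ v, ¬ Relation.TransGen A v v) (f : α → ℕ) :
    (∀ k, GK V A f (k + 1) ≤ GK V A f k) ∧
    (∃ N, ∀ k, N ≤ k → GK V A f k = 0) ∧
    (∀ ℓ, MGK V A f ℓ ≤ MGK V A f (ℓ + 1)) ∧
    (∀ ℓ, MGK V A f (ℓ + 2) + MGK V A f ℓ ≤ 2 * MGK V A f (ℓ + 1)) ∧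
    (∃ N, ∀ ℓ, N ≤ ℓ → MGK V A f ℓ = MGK V A f N) := by
  obtain ⟨S, rfl⟩ := hVfin.exists_finset_coe
  have hmono := MGK_le_MGK_succ (S := S) (A := A) f
  have hconcave := MGK_concave f hA hacyclic
  obtain ⟨N, hN⟩ := (monotone_nat_of_le_succ hmono).exists_forall_ge_eq_of_bddAbove
    ⟨_, Set.forall_mem_range.mpr (MGK_le_sum f)⟩
  refine ⟨fun k => ?_, ⟨N, fun k hk => ?_⟩, hmono, hconcave, ⟨N, hN⟩⟩
  · have : MGK S A f (k + 1 + 1) + MGK S A f k ≤ 2 * MGK S A f (k + 1) := hconcave k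
    have := hmono k
    have := hmono (k + 1)
    simp only [GK]
    omega
  · rw [GK, hN k hk, hN (k + 1) (by omega), Nat.sub_self]

end RSKPaper
end
end

section
/- Let λ be a nonzero integer partition and let f be a filling of shape λ. Then RSK_λ(f) is a reverse plane partition of shape λ. -/
noncomputable section

namespace RSKPaper

/-!
The value of `RSK_λ(f)` at a box `(i, j)` whose diagonal has maximal box `(u, v)` is the
`(u - i + 1)`-st part of the Greene–Kleitman invariant of `f` on the `u × v` rectangle, and there
`M_ℓ` is attained by `ℓ` maximal lattice paths. A step to the right moves the maximal box to
`(u, v + 1)` or to `(u - 1, v)`, a step down to `(u + 1, v)` or to `(u, v - 1)`. So it suffices that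
the invariants of the rectangles `u × v` and `u × (v + 1)` interlace,
`GK_k(u × v) ≤ GK_k(u × (v + 1))` and `GK_{k+1}(u × (v + 1)) ≤ GK_k(u × v)`,
together with the transposed statements. Both come from the exchange inequality
`M_a(u × v) + M_b(u × (v + 1)) ≤ M_⌊(a+b)/2⌋(u × v) + M_⌈(a+b)/2⌉(u × (v + 1))`:
cut each path of `u × (v + 1)` where it enters the last column and let it run down column `v`
instead, sort all `a + b` paths of `u × v` level by level (this keeps the number of paths through
every cell), give the odd-indexed sorted paths to `u × v`, and rebuild the even-indexed ones,
together with the piece of the last column, into paths of `u × (v + 1)`.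
-/

open Finset

/-- A maximal lattice path from `(1, 1)` to `(u, v)` in the `u × v` rectangle, recorded by the
row `s d` of its cell `(s d, d + 2 - s d)` on the antidiagonal `i + j = d + 2`. -/
def IsStair (u v : ℕ) (s : ℕ → ℕ) : Prop :=
  s 0 = 1 ∧ (∀ d, s (d + 1) = s d ∨ s (d + 1) = s d + 1) ∧
    ∀ d, d + 2 ≤ u + v → s d ≤ u ∧ d + 2 ≤ s d + v

def cells (s : ℕ → ℕ) (L : ℕ) : Finset (ℕ × ℕ) :=
  (range (L + 1)).image fun d => (s d, d + 2 - s d)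

namespace IsStair

variable {u v : ℕ} {s : ℕ → ℕ}

lemma one_le (hs : IsStair u v s) (d : ℕ) : 1 ≤ s d := by
  induction d with
  | zero => rw [hs.1]
  | succ n ih => rcases hs.2.1 n with h | h <;> omega

lemma le_succ (hs : IsStair u v s) (d : ℕ) : s d ≤ d + 1 := by
  induction d with
  | zero => rw [hs.1]
  | succ n ih => rcases hs.2.1 n with h | h <;> omega

lemma monotone (hs : IsStair u v s) : Monotone s :=
  monotone_nat_of_le_succ fun d => by rcases hs.2.1 d with h | h <;> omega

lemma add_le_add_of_le (hs : IsStair u v s) {d d' : ℕ} (h : d ≤ d') : s d' + d ≤ s d + d' := by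
  induction d', h using Nat.le_induction with
  | base => rfl
  | succ n _ ih => rcases hs.2.1 n with h | h <;> omega

lemma mem_cells (hs : IsStair u v s) {L : ℕ} {c : ℕ × ℕ} :
    c ∈ cells s L ↔ ∃ d ≤ L, s d = c.1 ∧ c.1 + c.2 = d + 2 := by
  simp only [cells, mem_image, mem_range, Nat.lt_succ_iff]
  constructor
  · rintro ⟨d, hd, rfl⟩
    exact ⟨d, hd, rfl, by have := hs.le_succ d; dsimp only; omega⟩
  · rintro ⟨d, hd, h1, h2⟩
    exact ⟨d, hd, Prod.ext h1 (by dsimp only; omega)⟩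

lemma cells_subset_Icc (hs : IsStair u v s) (hu : 1 ≤ u) (hv : 1 ≤ v) :
    cells s (u + v - 2) ⊆ Icc (1, 1) (u, v) := by
  intro c hc
  obtain ⟨d, hd, h1, h2⟩ := hs.mem_cells.1 hc
  have := hs.2.2 d (by omega)
  have := hs.one_le d
  have := hs.le_succ d
  simp only [mem_Icc, Prod.le_def]
  omega

lemma transpose (hs : IsStair u v s) :
    IsStair v u fun d => d + 2 - s d := by
  refine ⟨by simp [hs.1], fun d => ?_, fun d hd => ?_⟩
  · have := hs.le_succ d
    dsimp only
    rcases hs.2.1 d with h | h <;> omega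
  · have := hs.2.2 d (by omega)
    have := hs.le_succ d
    dsimp only
    omega

lemma cells_transpose (hs : IsStair u v s) (L : ℕ) :
    cells (fun d => d + 2 - s d) L = (cells s L).image Prod.swap := by
  rw [cells, cells, image_image]
  refine image_congr fun d _ => ?_
  have := hs.le_succ d
  exact Prod.ext rfl (by dsimp only [Function.comp, Prod.swap]; omega)

end IsStair

lemma cells_mono (s : ℕ → ℕ) {L L' : ℕ} (h : L ≤ L') : cells s L ⊆ cells s L' :=
  image_subset_image (range_subset_range.2 (by omega))

lemma exists_stair_through {u v : ℕ} {a : ℕ × ℕ} (ha₁ : (1, 1) ≤ a) (ha₂ : a ≤ (u, v)) :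
    ∃ s, IsStair u v s ∧ s (a.1 + a.2 - 2) = a.1 := by
  obtain ⟨h₁, h₂⟩ := Prod.le_def.1 ha₁
  obtain ⟨h₃, h₄⟩ := Prod.le_def.1 ha₂
  -- along the first row, down column `a.2` to `a`, along row `a.1`, down the last column
  refine ⟨fun d => max (min (max 1 (d + 2 - a.2)) a.1) (d + 2 - v),
    ⟨?_, fun d => ?_, fun d _ => ?_⟩, ?_⟩
  all_goals dsimp only at *; omega

lemma exists_stair (u v : ℕ) (hu : 1 ≤ u) (hv : 1 ≤ v) : ∃ s, IsStair u v s :=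
  (exists_stair_through (a := (1, 1)) le_rfl (Prod.mk_le_mk.2 ⟨hu, hv⟩)).imp fun _ h => h.1

namespace IsStair

variable {u v : ℕ} {s : ℕ → ℕ}

lemma extend (hs : IsStair u v s) (hu : 1 ≤ u) (hv : 1 ≤ v) :
    ∃ t, IsStair u (v + 1) t ∧ cells s (u + v - 2) ⊆ cells t (u + (v + 1) - 2) := by
  have htop := hs.2.2 (u + v - 2) (by omega)
  refine ⟨fun d => min (s d) u, ⟨?_, fun d => ?_, fun d hd => ?_⟩, fun c hc => ?_⟩
  · simp only [hs.1]; omega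
  · dsimp only; rcases hs.2.1 d with h | h <;> rw [h] <;> omega
  · rcases le_or_gt d (u + v - 2) with h | h
    · have := hs.2.2 d (by omega); dsimp only; omega
    · have := hs.monotone h.le; dsimp only; omega
  · obtain ⟨d, hd, h1, h2⟩ := hs.mem_cells.1 hc
    have := hs.2.2 d (by omega)
    have := hs.le_succ d
    simp only [cells, mem_image, mem_range]
    exact ⟨d, by omega, Prod.ext (by dsimp only; omega) (by dsimp only; omega)⟩

/-- Cut a path of the `u × (v + 1)` rectangle at the last level `D` before it enters column
`v + 1`, and let it continue down column `v` instead. -/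
lemma exists_split_last_column (hs : IsStair u (v + 1) s) (hu : 1 ≤ u) (hv : 1 ≤ v) :
    ∃ D, D + 2 ≤ u + v ∧ ∃ σ, IsStair u v σ ∧ (∀ d, D ≤ d → σ d + v = d + 2) ∧
      cells s (u + (v + 1) - 2) ⊆ cells σ D ∪ Icc (σ D) u ×ˢ {v + 1} := by
  obtain ⟨D, hD⟩ : ∃ D, Nat.findGreatest (fun d => d + 2 ≤ s d + v) (u + v - 2) = D := ⟨_, rfl⟩
  have hPD : D + 2 ≤ s D + v := hD ▸ Nat.findGreatest_spec (P := fun d => d + 2 ≤ s d + v)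
    (Nat.zero_le _) (show 0 + 2 ≤ s 0 + v by rw [hs.1]; omega)
  have hDle : D ≤ u + v - 2 := hD ▸ Nat.findGreatest_le _
  have hsD : s D + v = D + 2 := by
    have := hs.2.2 D (by omega)
    rcases eq_or_lt_of_le hDle with h | h
    · omega
    · have : ¬ D + 1 + 2 ≤ s (D + 1) + v := Nat.findGreatest_is_greatest
        (P := fun d => d + 2 ≤ s d + v) (n := u + v - 2) (by omega) (by omega)
      have := hs.monotone (show D ≤ D + 1 by omega)
      omega
  refine ⟨D, by omega, fun d => max (s d) (d + 2 - v),
    ⟨by simp only [hs.1]; omega, fun d => ?_, fun d hd => ?_⟩, fun d hd => ?_, fun c hc => ?_⟩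
  · dsimp only; rcases hs.2.1 d with h | h <;> rw [h] <;> omega
  · have := hs.2.2 d (by omega); dsimp only; omega
  · have := hs.add_le_add_of_le hd; dsimp only; omega
  · obtain ⟨d, hd, h1, h2⟩ := hs.mem_cells.1 hc
    have hb := hs.2.2 d (by omega)
    rw [mem_union, mem_product, mem_Icc, mem_singleton]
    by_cases hP : d + 2 ≤ s d + v
    · have hdD : d ≤ D := hD ▸ Nat.le_findGreatest (by omega) hP
      left
      simp only [cells, mem_image, mem_range]
      exact ⟨d, by omega, Prod.ext (by dsimp only; omega) (by dsimp only; omega)⟩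
    · have hDd : D ≤ d := by
        by_contra h
        have := hs.add_le_add_of_le (show d ≤ D by omega)
        omega
      have := hs.monotone hDd
      right
      dsimp only
      omega

/-- Conversely, a path of the `u × v` rectangle that has reached column `v` at level `D` may turn
into column `v + 1` there. -/
lemma exists_join_last_column (hs : IsStair u v s) {D : ℕ} (hDle : D + 2 ≤ u + v)
    (hD : s D + v = D + 2) :
    ∃ t, IsStair u (v + 1) t ∧ cells s D ∪ Icc (s D) u ×ˢ {v + 1} ⊆ cells t (u + (v + 1) - 2) := by
  have h1 := hs.one_le D
  refine ⟨fun d => if d ≤ D then s d else d + 1 - v, ⟨?_, fun d => ?_, fun d hd => ?_⟩,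
    fun c hc => ?_⟩
  · simp [hs.1]
  · dsimp only
    rcases lt_trichotomy d D with h | rfl | h
    · rw [if_pos h.le, if_pos (by omega)]; exact hs.2.1 d
    · rw [if_pos le_rfl, if_neg (by omega)]; omega
    · rw [if_neg (by omega), if_neg (by omega)]; omega
  · have := hs.2.2 D (by omega)
    dsimp only
    split_ifs with h
    · have := hs.2.2 d (by omega); omega
    · omega
  · simp only [cells, mem_image, mem_range]
    rcases mem_union.1 hc with hc | hc
    · obtain ⟨d, hd, h1, h2⟩ := hs.mem_cells.1 hc
      have := hs.2.2 D (by omega)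
      exact ⟨d, by omega, Prod.ext (by simp [hd, h1]) (by simp [hd]; omega)⟩
    · have := hs.2.2 D (by omega)
      rw [mem_product, mem_Icc, mem_singleton] at hc
      refine ⟨c.1 + v - 1, by omega, Prod.ext ?_ ?_⟩ <;> dsimp only <;> rw [if_neg (by omega)] <;>
        omega

end IsStair

def stairWeights (u v : ℕ) (w : ℕ × ℕ → ℕ) (ℓ : ℕ) : Set ℕ :=
  {x | ∃ t : Fin ℓ → ℕ → ℕ, (∀ i, IsStair u v (t i)) ∧
    x = ∑ c ∈ univ.biUnion fun i => cells (t i) (u + v - 2), w c}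

/-- `M_ℓ` of the `u × v` rectangle, the maximum being taken over maximal paths only. -/
def maxWeight (u v : ℕ) (w : ℕ × ℕ → ℕ) (ℓ : ℕ) : ℕ := sSup (stairWeights u v w ℓ)

section maxWeight

variable {u v : ℕ} {w : ℕ × ℕ → ℕ}

lemma bddAbove_stairWeights (hu : 1 ≤ u) (hv : 1 ≤ v) (w : ℕ × ℕ → ℕ) (ℓ : ℕ) :
    BddAbove (stairWeights u v w ℓ) := by
  refine ⟨∑ c ∈ Icc (1, 1) (u, v), w c, ?_⟩
  rintro x ⟨t, ht, rfl⟩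
  exact sum_le_sum_of_subset (biUnion_subset.2 fun i _ => (ht i).cells_subset_Icc hu hv)

lemma maxWeight_mem_stairWeights (hu : 1 ≤ u) (hv : 1 ≤ v) (w : ℕ × ℕ → ℕ) (ℓ : ℕ) :
    maxWeight u v w ℓ ∈ stairWeights u v w ℓ := by
  obtain ⟨s₀, hs₀⟩ := exists_stair u v hu hv
  exact Nat.sSup_mem ⟨_, fun _ => s₀, fun _ => hs₀, rfl⟩ (bddAbove_stairWeights hu hv w ℓ)

lemma sum_le_maxWeight (hu : 1 ≤ u) (hv : 1 ≤ v) {ℓ : ℕ} {S : Finset (ℕ → ℕ)} (hS : #S ≤ ℓ)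
    (hst : ∀ s ∈ S, IsStair u v s) :
    ∑ c ∈ S.biUnion fun s => cells s (u + v - 2), w c ≤ maxWeight u v w ℓ := by
  obtain ⟨s₀, hs₀⟩ := exists_stair u v hu hv
  let t : Fin ℓ → ℕ → ℕ := fun i => if h : (i : ℕ) < #S then S.equivFin.symm ⟨i, h⟩ else s₀
  have ht : ∀ i, IsStair u v (t i) := fun i => by
    by_cases h : (i : ℕ) < #S
    · simp only [t, dif_pos h]; exact hst _ (coe_mem _)
    · simp only [t, dif_neg h]; exact hs₀
  refine le_trans (sum_le_sum_of_subset fun c hc => ?_)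
    (le_csSup (bddAbove_stairWeights hu hv w ℓ) ⟨t, ht, rfl⟩)
  obtain ⟨s, hs, hcs⟩ := mem_biUnion.1 hc
  have hi := (S.equivFin ⟨s, hs⟩).2
  refine mem_biUnion.2 ⟨⟨S.equivFin ⟨s, hs⟩, by omega⟩, mem_univ _, ?_⟩
  simp only [t, dif_pos hi, Fin.eta, Equiv.symm_apply_apply]
  exact hcs

lemma sum_biUnion_le_maxWeight (hu : 1 ≤ u) (hv : 1 ≤ v) {ι : Type*} {P : Finset ι}
    {G : ι → ℕ → ℕ} (hG : ∀ p ∈ P, IsStair u v (G p)) {ℓ : ℕ} (hP : #P ≤ ℓ) :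
    ∑ c ∈ P.biUnion fun p => cells (G p) (u + v - 2), w c ≤ maxWeight u v w ℓ := by
  classical
  rw [← image_biUnion (f := G) (t := fun s => cells s (u + v - 2))]
  exact sum_le_maxWeight hu hv (card_image_le.trans hP) (by simpa using hG)

lemma maxWeight_zero (hu : 1 ≤ u) (hv : 1 ≤ v) (w : ℕ × ℕ → ℕ) : maxWeight u v w 0 = 0 := by
  obtain ⟨t, -, h⟩ := maxWeight_mem_stairWeights hu hv w 0
  simp [h]

lemma maxWeight_mono (hu : 1 ≤ u) (hv : 1 ≤ v) (w : ℕ × ℕ → ℕ) {k l : ℕ} (h : k ≤ l) :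
    maxWeight u v w k ≤ maxWeight u v w l := by
  obtain ⟨t, ht, hk⟩ := maxWeight_mem_stairWeights hu hv w k
  rw [hk]
  exact sum_biUnion_le_maxWeight hu hv (fun i _ => ht i) (by simpa using h)

lemma maxWeight_le_maxWeight_succ_right (hu : 1 ≤ u) (hv : 1 ≤ v) (w : ℕ × ℕ → ℕ) (ℓ : ℕ) :
    maxWeight u v w ℓ ≤ maxWeight u (v + 1) w ℓ := by
  obtain ⟨t, ht, hℓ⟩ := maxWeight_mem_stairWeights hu hv w ℓ
  choose t' ht' hcells using fun i => (ht i).extend hu hv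
  rw [hℓ]
  refine le_trans (sum_le_sum_of_subset fun c hc => ?_)
    (le_csSup (bddAbove_stairWeights hu (by omega) w ℓ) ⟨t', ht', rfl⟩)
  obtain ⟨i, -, hci⟩ := mem_biUnion.1 hc
  exact mem_biUnion.2 ⟨i, mem_univ _, hcells i hci⟩

lemma maxWeight_le_maxWeight_swap (hu : 1 ≤ u) (hv : 1 ≤ v) (w : ℕ × ℕ → ℕ) (ℓ : ℕ) :
    maxWeight u v w ℓ ≤ maxWeight v u (w ∘ Prod.swap) ℓ := by
  obtain ⟨t, ht, hℓ⟩ := maxWeight_mem_stairWeights hu hv w ℓ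
  have hcells : (univ.biUnion fun i => cells (t i) (u + v - 2)).image Prod.swap =
      univ.biUnion fun i => cells (fun d => d + 2 - t i d) (v + u - 2) := by
    rw [biUnion_image, add_comm v u]
    exact biUnion_congr rfl fun i _ => ((ht i).cells_transpose _).symm
  rw [hℓ]
  refine le_of_eq_of_le ?_ (le_csSup (bddAbove_stairWeights hv hu _ ℓ)
    ⟨_, fun i => (ht i).transpose, rfl⟩)
  rw [← hcells, sum_image fun _ _ _ _ h => Prod.swap_injective h]
  rfl

lemma maxWeight_swap (hu : 1 ≤ u) (hv : 1 ≤ v) (w : ℕ × ℕ → ℕ) (ℓ : ℕ) :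
    maxWeight u v w ℓ = maxWeight v u (w ∘ Prod.swap) ℓ :=
  (maxWeight_le_maxWeight_swap hu hv w ℓ).antisymm
    (maxWeight_le_maxWeight_swap hv hu (w ∘ Prod.swap) ℓ)

end maxWeight

/-- Two indices `p < q` with `c ∈ Y p`, `c ∈ Y q` give the consecutive ones `p` and `p + 1`,
one even and one odd. -/
lemma sum_add_sum_le_sum_even_add_sum_odd {α : Type*} [DecidableEq α] {N : ℕ}
    (Y : Fin N → Finset α) (hY : ∀ c, Set.OrdConnected {p | c ∈ Y p}) (w : α → ℕ)
    {U₁ U₂ : Finset α} (h₁ : ∀ c ∈ U₁ ∪ U₂, ∃ p, c ∈ Y p)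
    (h₂ : ∀ c ∈ U₁ ∩ U₂, 1 < #{p | c ∈ Y p}) :
    ∑ c ∈ U₁, w c + ∑ c ∈ U₂, w c ≤
      ∑ c ∈ (univ.filter fun p : Fin N => Even (p : ℕ)).biUnion Y, w c +
        ∑ c ∈ (univ.filter fun p : Fin N => Odd (p : ℕ)).biUnion Y, w c := by
  set E := (univ.filter fun p : Fin N => Even (p : ℕ)).biUnion Y
  set O := (univ.filter fun p : Fin N => Odd (p : ℕ)).biUnion Y
  have hmem (c : α) (p : Fin N) (hp : c ∈ Y p) : (Even (p : ℕ) → c ∈ E) ∧ (Odd (p : ℕ) → c ∈ O) :=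
    ⟨fun h => mem_biUnion.2 ⟨p, by simpa using h, hp⟩,
      fun h => mem_biUnion.2 ⟨p, by simpa using h, hp⟩⟩
  rw [← sum_union_inter, ← sum_union_inter (s₁ := E)]
  refine add_le_add (sum_le_sum_of_subset fun c hc => ?_) (sum_le_sum_of_subset fun c hc => ?_)
  · obtain ⟨p, hp⟩ := h₁ c hc
    rcases Nat.even_or_odd (p : ℕ) with h | h
    · exact mem_union_left _ ((hmem c p hp).1 h)
    · exact mem_union_right _ ((hmem c p hp).2 h)
  · obtain ⟨p, hp, q, hq, hpq⟩ := one_lt_card.1 (h₂ c hc)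
    simp only [mem_filter, mem_univ, true_and] at hp hq
    wlog hlt : p < q generalizing p q
    · exact this q p (Ne.symm hpq) hq hp (lt_of_le_of_ne (not_lt.1 hlt) (Ne.symm hpq))
    have hp' : c ∈ Y ⟨p + 1, by omega⟩ :=
      (hY c).out hp hq ⟨Fin.le_def.2 (by simp), Fin.le_def.2 (by simp; omega)⟩
    rcases Nat.even_or_odd (p : ℕ) with h | h
    · exact mem_inter.2 ⟨(hmem c p hp).1 h, (hmem c _ hp').2 h.add_one⟩
    · exact mem_inter.2 ⟨(hmem c _ hp').1 h.add_one, (hmem c p hp).2 h⟩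

lemma card_odd_le (N : ℕ) : #{p : Fin N | Odd (p : ℕ)} ≤ N / 2 := by
  refine (card_le_card_of_injOn (s := {p : Fin N | Odd (p : ℕ)}) (fun p => (p : ℕ) / 2)
    (t := range (N / 2)) (fun p hp => ?_) (fun p hp q hq h => ?_)).trans (card_range _).le
  · simp only [coe_filter, mem_univ, true_and, Set.mem_ofPred_eq, Nat.odd_iff] at hp
    simp only [coe_range, Set.mem_Iio]
    omega
  · simp only [coe_filter, mem_univ, true_and, Set.mem_ofPred_eq, Nat.odd_iff] at hp hq h
    exact Fin.ext (by omega)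

lemma card_even_ne_zero_le (N : ℕ) :
    #{p : Fin N | Even (p : ℕ) ∧ (p : ℕ) ≠ 0} ≤ (N + 1) / 2 - 1 := by
  refine (card_le_card_of_injOn (s := {p : Fin N | Even (p : ℕ) ∧ (p : ℕ) ≠ 0})
    (fun p => (p : ℕ) / 2 - 1) (t := range ((N + 1) / 2 - 1)) (fun p hp => ?_)
    (fun p hp q hq h => ?_)).trans (card_range _).le
  · simp only [coe_filter, mem_univ, true_and, Set.mem_ofPred_eq, Nat.even_iff] at hp
    simp only [coe_range, Set.mem_Iio]
    omega
  · simp only [coe_filter, mem_univ, true_and, Set.mem_ofPred_eq, Nat.even_iff] at hp hq h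
    exact Fin.ext (by omega)

def levelSort {N : ℕ} (F : Fin N → ℕ → ℕ) (p : Fin N) (d : ℕ) : ℕ :=
  F (Tuple.sort (fun i => F i d) p) d

section levelSort

variable {N : ℕ} {F : Fin N → ℕ → ℕ}

lemma monotone_levelSort (F : Fin N → ℕ → ℕ) (d : ℕ) : Monotone fun p => levelSort F p d :=
  Tuple.monotone_sort fun i => F i d

lemma levelSort_sort_symm (F : Fin N → ℕ → ℕ) (d : ℕ) (i : Fin N) :
    levelSort F ((Tuple.sort fun i => F i d).symm i) d = F i d := by
  simp [levelSort]

lemma card_levelSort (F : Fin N → ℕ → ℕ) (d : ℕ) (P : ℕ → Prop) [DecidablePred P] :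
    #{p | P (levelSort F p d)} = #{i | P (F i d)} :=
  card_equiv (Tuple.sort fun i => F i d) fun p => by
    rw [mem_filter_univ, mem_filter_univ]; rfl

lemma levelSort_le_iff (F : Fin N → ℕ → ℕ) (d : ℕ) (p : Fin N) (x : ℕ) :
    levelSort F p d ≤ x ↔ (p : ℕ) < #{i | F i d ≤ x} := by
  rw [← card_levelSort F d (· ≤ x)]
  exact (Tuple.lt_card_le_iff_apply_le_of_monotone (monotone_levelSort F d)).symm

lemma isStair_levelSort {u v : ℕ} (hF : ∀ i, IsStair u v (F i)) (p : Fin N) :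
    IsStair u v (levelSort F p) := by
  refine ⟨(hF _).1, fun d => ?_, fun d hd => (hF _).2.2 d hd⟩
  have h₁ : levelSort F p d ≤ levelSort F p (d + 1) := by
    refine (levelSort_le_iff F d p _).2 ((levelSort_le_iff F (d + 1) p _).1 le_rfl |>.trans_le ?_)
    exact card_le_card fun i hi => by
      simp only [mem_filter, mem_univ, true_and] at hi ⊢
      exact ((hF i).monotone (Nat.le_succ d)).trans hi
  have h₂ : levelSort F p (d + 1) ≤ levelSort F p d + 1 := by
    refine (levelSort_le_iff F (d + 1) p _).2 ((levelSort_le_iff F d p _).1 le_rfl |>.trans_le ?_)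
    exact card_le_card fun i hi => by
      simp only [mem_filter, mem_univ, true_and] at hi ⊢
      rcases (hF i).2.1 d with h | h <;> omega
  omega

end levelSort

/-! The member `z` of `F` runs down the last column from level `D` on and is cut off there; in the
sorted family the bottom path `levelSort F 0` is cut off instead. A cell in column `v` has the
smallest row of its level, so from level `D` on the bottom path agrees with `z`, and the number of
paths through each cell does not change. -/
section truncation

variable {u v N D : ℕ} {F : Fin N → ℕ → ℕ} {z : Fin N}

lemma levelSort_zero_eq (hF : ∀ i, IsStair u v (F i)) (hz : ∀ d, D ≤ d → F z d + v = d + 2)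
    {d : ℕ} (hDd : D ≤ d) (hd : d + 2 ≤ u + v) : levelSort F ⟨0, z.pos⟩ d = F z d := by
  refine le_antisymm ?_ ?_
  · rw [← levelSort_sort_symm F d z]
    exact monotone_levelSort F d (Fin.le_def.2 (Nat.zero_le _))
  · have := (hF (Tuple.sort (fun i => F i d) ⟨0, z.pos⟩)).2.2 d hd
    have := hz d hDd
    simp only [levelSort]
    omega

lemma card_mem_cells_levelSort (hF : ∀ i, IsStair u v (F i))
    (hz : ∀ d, D ≤ d → F z d + v = d + 2) (hD : D + 2 ≤ u + v) (c : ℕ × ℕ) :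
    #{p : Fin N | c ∈ cells (levelSort F p) (if (p : ℕ) = 0 then D else u + v - 2)} =
      #{i | c ∈ cells (F i) (if i = z then D else u + v - 2)} := by
  have hmem : ∀ {s : ℕ → ℕ} {L : ℕ}, IsStair u v s →
      (c ∈ cells s L ↔ 2 ≤ c.1 + c.2 ∧ c.1 + c.2 - 2 ≤ L ∧ s (c.1 + c.2 - 2) = c.1) :=
    fun hs => hs.mem_cells.trans ⟨fun ⟨d, hd, h₁, h₂⟩ => by
      obtain rfl : d = c.1 + c.2 - 2 := by omega
      exact ⟨by omega, hd, h₁⟩, fun h => ⟨_, h.2.1, h.2.2, by omega⟩⟩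
  simp only [hmem (isStair_levelSort hF _), hmem (hF _)]
  set d := c.1 + c.2 - 2
  rcases le_or_gt d D with hdD | hDd
  · have (b : Prop) [Decidable b] : d ≤ (if b then D else u + v - 2) := by split_ifs <;> omega
    simp only [this, true_and]
    exact card_levelSort F d (fun x => 2 ≤ c.1 + c.2 ∧ x = c.1)
  have (b : Prop) [Decidable b] : d ≤ (if b then D else u + v - 2) ↔ ¬b ∧ d ≤ u + v - 2 := by
    split_ifs with hb <;> simp [hb, hDd.not_ge]
  simp only [this]
  by_cases hc : 2 ≤ c.1 + c.2 ∧ d ≤ u + v - 2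
  · have herase {ι : Type} [Fintype ι] [DecidableEq ι] (a : ι) (P : ι → Prop) [DecidablePred P] :
        #{i | 2 ≤ c.1 + c.2 ∧ (¬i = a ∧ d ≤ u + v - 2) ∧ P i} = #((univ.filter P).erase a) := by
      congr 1; ext i; simp [hc, and_comm]
    simp only [show ∀ p : Fin N, (p : ℕ) = 0 ↔ p = ⟨0, z.pos⟩ from fun p => by simp [Fin.ext_iff],
      herase, card_erase_eq_ite, mem_filter, mem_univ, true_and, card_levelSort F d (· = c.1),
      levelSort_zero_eq hF hz hDd.le (by omega)]
  · rw [filter_false_of_mem fun p _ h => hc ⟨h.1, h.2.1.2⟩,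
      filter_false_of_mem fun i _ h => hc ⟨h.1, h.2.1.2⟩]

lemma ordConnected_mem_cells_levelSort (hF : ∀ i, IsStair u v (F i)) (hD : D + 2 ≤ u + v)
    (c : ℕ × ℕ) : Set.OrdConnected
      {p : Fin N | c ∈ cells (levelSort F p) (if (p : ℕ) = 0 then D else u + v - 2)} := by
  refine ⟨fun p hp q hq r ⟨hpr, hrq⟩ => ?_⟩
  obtain ⟨d, hd, hp₁, hp₂⟩ := (isStair_levelSort hF p).mem_cells.1 hp
  obtain ⟨d', hd', hq₁, hq₂⟩ := (isStair_levelSort hF q).mem_cells.1 hq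
  obtain rfl : d = d' := by omega
  have h₁ : levelSort F p d ≤ levelSort F r d := monotone_levelSort F d hpr
  have h₂ : levelSort F r d ≤ levelSort F q d := monotone_levelSort F d hrq
  refine (isStair_levelSort hF r).mem_cells.2 ⟨d, ?_, by omega, hp₂⟩
  rw [Fin.le_def] at hpr
  split_ifs at hd hd' ⊢ <;> omega

lemma sum_add_sum_le_levelSort (hF : ∀ i, IsStair u v (F i))
    (hz : ∀ d, D ≤ d → F z d + v = d + 2) (hD : D + 2 ≤ u + v) (w : ℕ × ℕ → ℕ)
    {U₁ U₂ : Finset (ℕ × ℕ)}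
    (h₁ : ∀ c ∈ U₁ ∪ U₂, ∃ i, c ∈ cells (F i) (if i = z then D else u + v - 2))
    (h₂ : ∀ c ∈ U₁ ∩ U₂, ∃ i j, i ≠ j ∧ c ∈ cells (F i) (if i = z then D else u + v - 2) ∧
      c ∈ cells (F j) (if j = z then D else u + v - 2)) :
    ∑ c ∈ U₁, w c + ∑ c ∈ U₂, w c ≤
      ∑ c ∈ (univ.filter fun p : Fin N => Even (p : ℕ)).biUnion
          (fun p => cells (levelSort F p) (if (p : ℕ) = 0 then D else u + v - 2)), w c +
        ∑ c ∈ (univ.filter fun p : Fin N => Odd (p : ℕ)).biUnion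
          (fun p => cells (levelSort F p) (u + v - 2)), w c := by
  have hodd : (univ.filter fun p : Fin N => Odd (p : ℕ)).biUnion
        (fun p => cells (levelSort F p) (u + v - 2)) =
      (univ.filter fun p : Fin N => Odd (p : ℕ)).biUnion
        (fun p => cells (levelSort F p) (if (p : ℕ) = 0 then D else u + v - 2)) :=
    biUnion_congr rfl fun p hp => by
      simp only [mem_filter, mem_univ, true_and] at hp
      rw [if_neg fun h => by simp [h] at hp]
  rw [hodd]
  refine sum_add_sum_le_sum_even_add_sum_odd _ (ordConnected_mem_cells_levelSort hF hD) w
    (fun c hc => ?_) (fun c hc => ?_)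
  · obtain ⟨i, hi⟩ := h₁ c hc
    have : 0 < #{i | c ∈ cells (F i) (if i = z then D else u + v - 2)} :=
      card_pos.2 ⟨i, by simpa using hi⟩
    rw [← card_mem_cells_levelSort hF hz hD] at this
    obtain ⟨p, hp⟩ := card_pos.1 this
    exact ⟨p, by simpa using hp⟩
  · obtain ⟨i, j, hij, hi, hj⟩ := h₂ c hc
    rw [card_mem_cells_levelSort hF hz hD]
    exact one_lt_card.2 ⟨i, by simpa using hi, j, by simpa using hj, hij⟩

end truncation

/-- The first path turns into column `v + 1` at level `D`; each other one gains the box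
`(u, v + 1)`. -/
lemma sum_even_add_sum_column_le {u v N D : ℕ} (hu : 1 ≤ u) (hv : 1 ≤ v) (hN : 0 < N)
    {S : Fin N → ℕ → ℕ} (hS : ∀ p, IsStair u v (S p)) (hD : D + 2 ≤ u + v)
    (hSD : S ⟨0, hN⟩ D + v = D + 2) (w : ℕ × ℕ → ℕ) :
    ∑ c ∈ (univ.filter fun p : Fin N => Even (p : ℕ)).biUnion
        (fun p => cells (S p) (if (p : ℕ) = 0 then D else u + v - 2)), w c +
      ∑ c ∈ Icc (S ⟨0, hN⟩ D) u ×ˢ {v + 1}, w c ≤ maxWeight u (v + 1) w ((N + 1) / 2) := by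
  classical
  obtain ⟨t₀, ht₀, hcells₀⟩ := (hS ⟨0, hN⟩).exists_join_last_column hD hSD
  choose t ht hcells using fun p => (hS p).extend hu hv
  set P : Finset (Fin N) := univ.filter fun p => Even (p : ℕ) ∧ (p : ℕ) ≠ 0
  have hdisj : Disjoint ((univ.filter fun p : Fin N => Even (p : ℕ)).biUnion
      fun p => cells (S p) (if (p : ℕ) = 0 then D else u + v - 2))
      (Icc (S ⟨0, hN⟩ D) u ×ˢ {v + 1}) := by
    refine disjoint_left.2 fun c hc hc' => ?_
    obtain ⟨p, -, hcp⟩ := mem_biUnion.1 hc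
    have := mem_Icc.1 ((hS p).cells_subset_Icc hu hv (cells_mono _ (by split_ifs <;> omega) hcp))
    simp only [mem_product, mem_singleton] at hc'
    have := this.2.2
    omega
  rw [← sum_union hdisj]
  refine (sum_le_sum_of_subset fun c hc => ?_).trans (sum_le_maxWeight hu (by omega)
    (S := insert t₀ (P.image t)) ((card_insert_le _ _).trans ?_) ?_)
  · simp only [mem_biUnion, mem_insert, mem_image]
    rcases mem_union.1 hc with hc | hc
    · obtain ⟨p, hp, hcp⟩ := mem_biUnion.1 hc
      by_cases h0 : (p : ℕ) = 0
      · obtain rfl : p = ⟨0, hN⟩ := Fin.ext h0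
        rw [if_pos rfl] at hcp
        exact ⟨t₀, Or.inl rfl, hcells₀ (mem_union_left _ hcp)⟩
      · rw [if_neg h0] at hcp
        exact ⟨t p, Or.inr ⟨p, by simpa [P, h0] using hp, rfl⟩, hcells p hcp⟩
    · exact ⟨t₀, Or.inl rfl, hcells₀ (mem_union_right _ hc)⟩
  · have : #P ≤ (N + 1) / 2 - 1 := card_even_ne_zero_le N
    have := card_image_le (s := P) (f := t)
    omega
  · simp only [mem_insert, mem_image]
    rintro _ (rfl | ⟨p, -, rfl⟩)
    exacts [ht₀, ht p]

lemma sum_add_sum_le_levelSort_append {u v a b : ℕ} {γ : Fin a → ℕ → ℕ} {σ : Fin b → ℕ → ℕ}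
    (hγ : ∀ i, IsStair u v (γ i)) (hσ : ∀ j, IsStair u v (σ j)) {D : Fin b → ℕ}
    (hD : ∀ j, D j + 2 ≤ u + v) {j₀ : Fin b} (hσD : ∀ d, D j₀ ≤ d → σ j₀ d + v = d + 2)
    (w : ℕ × ℕ → ℕ) :
    ∑ c ∈ univ.biUnion fun i => cells (γ i) (u + v - 2), w c +
        ∑ c ∈ univ.biUnion fun j => cells (σ j) (D j), w c ≤
      ∑ c ∈ (univ.filter fun p : Fin (a + b) => Even (p : ℕ)).biUnion (fun p =>
          cells (levelSort (Fin.append γ σ) p) (if (p : ℕ) = 0 then D j₀ else u + v - 2)), w c +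
        ∑ c ∈ (univ.filter fun p : Fin (a + b) => Odd (p : ℕ)).biUnion
          (fun p => cells (levelSort (Fin.append γ σ) p) (u + v - 2)), w c := by
  set F : Fin (a + b) → ℕ → ℕ := Fin.append γ σ
  set z : Fin (a + b) := Fin.natAdd a j₀
  have hF : ∀ i, IsStair u v (F i) := Fin.addCases (by simpa [F] using hγ) (by simpa [F] using hσ)
  have hz : ∀ d, D j₀ ≤ d → F z d + v = d + 2 := by simpa [F, z] using hσD
  set L : Fin (a + b) → ℕ := fun i => if i = z then D j₀ else u + v - 2
  have hU₁ : ∀ c ∈ univ.biUnion fun i => cells (γ i) (u + v - 2),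
      ∃ i, c ∈ cells (F (Fin.castAdd b i)) (L (Fin.castAdd b i)) := fun c hc => by
    obtain ⟨i, -, hci⟩ := mem_biUnion.1 hc
    have : Fin.castAdd b i ≠ z := by simp [z, Fin.ext_iff]; omega
    exact ⟨i, by simpa [F, L, this] using hci⟩
  have hU₂ : ∀ c ∈ univ.biUnion fun j => cells (σ j) (D j),
      ∃ j, c ∈ cells (F (Fin.natAdd a j)) (L (Fin.natAdd a j)) := fun c hc => by
    obtain ⟨j, -, hcj⟩ := mem_biUnion.1 hc
    refine ⟨j, ?_⟩
    by_cases hj : j = j₀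
    · subst hj; simpa [F, L, z] using hcj
    · simpa [F, L, z, hj] using cells_mono _ (by have := hD j; omega) hcj
  refine sum_add_sum_le_levelSort hF hz (hD j₀) w (fun c hc => ?_) (fun c hc => ?_)
  · rcases mem_union.1 hc with hc | hc
    · obtain ⟨i, hi⟩ := hU₁ c hc; exact ⟨_, hi⟩
    · obtain ⟨j, hj⟩ := hU₂ c hc; exact ⟨_, hj⟩
  · obtain ⟨i, hi⟩ := hU₁ c (mem_inter.1 hc).1
    obtain ⟨j, hj⟩ := hU₂ c (mem_inter.1 hc).2
    exact ⟨_, _, by simp [Fin.ext_iff]; omega, hi, hj⟩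

theorem sum_add_sum_le_maxWeight_add_maxWeight {u v a b : ℕ} (hu : 1 ≤ u) (hv : 1 ≤ v)
    (hb : 0 < b) (w : ℕ × ℕ → ℕ) {γ : Fin a → ℕ → ℕ} (hγ : ∀ i, IsStair u v (γ i))
    {δ : Fin b → ℕ → ℕ} (hδ : ∀ j, IsStair u (v + 1) (δ j)) :
    ∑ c ∈ univ.biUnion fun i => cells (γ i) (u + v - 2), w c +
        ∑ c ∈ univ.biUnion fun j => cells (δ j) (u + (v + 1) - 2), w c ≤
      maxWeight u v w ((a + b) / 2) + maxWeight u (v + 1) w ((a + b + 1) / 2) := by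
  classical
  choose D hD σ hσ hσD hδσ using fun j => (hδ j).exists_split_last_column hu hv
  -- `δ j₀` enters the last column highest, so its part of that column contains all the others'.
  obtain ⟨j₀, -, hj₀⟩ := exists_min_image univ (fun j => σ j (D j)) ⟨⟨0, hb⟩, mem_univ _⟩
  have hsplit : ∑ c ∈ univ.biUnion fun j => cells (δ j) (u + (v + 1) - 2), w c ≤
      ∑ c ∈ univ.biUnion (fun j => cells (σ j) (D j)), w c +
        ∑ c ∈ Icc (σ j₀ (D j₀)) u ×ˢ {v + 1}, w c := by
    rw [← sum_union_inter]
    refine le_add_right (sum_le_sum_of_subset fun c hc => ?_)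
    obtain ⟨j, -, hcj⟩ := mem_biUnion.1 hc
    rcases mem_union.1 (hδσ j hcj) with h | h
    · exact mem_union_left _ (mem_biUnion.2 ⟨j, mem_univ _, h⟩)
    · simp only [mem_product, mem_Icc, mem_singleton] at h
      have := hj₀ j (mem_univ _)
      exact mem_union_right _ (by simp only [mem_product, mem_Icc, mem_singleton]; omega)
  have hγσ : ∀ i, IsStair u v (Fin.append γ σ i) :=
    Fin.addCases (by simpa using hγ) (by simpa using hσ)
  have hF := isStair_levelSort hγσ
  have hzD : levelSort (Fin.append γ σ) ⟨0, by omega⟩ (D j₀) = σ j₀ (D j₀) := by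
    rw [levelSort_zero_eq (z := Fin.natAdd a j₀) hγσ (by simpa using hσD j₀) le_rfl (hD j₀)]
    simp
  have hodd := sum_biUnion_le_maxWeight hu hv (w := w) (fun p _ => hF p) (card_odd_le (a + b))
  have heven := sum_even_add_sum_column_le hu hv (by omega) hF (D := D j₀) (hD j₀)
    (by rw [hzD]; exact hσD j₀ _ le_rfl) w
  rw [hzD] at heven
  have := sum_add_sum_le_levelSort_append hγ hσ hD (hσD j₀) w
  omega

/-- The Greene–Kleitman invariant of the `u × v` rectangle, `0`-indexed. -/
def rectGK (u v : ℕ) (w : ℕ × ℕ → ℕ) (k : ℕ) : ℕ := maxWeight u v w (k + 1) - maxWeight u v w k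

section rectGK

variable {u v : ℕ}

lemma rectGK_le_rectGK_succ_right (hu : 1 ≤ u) (hv : 1 ≤ v) (w : ℕ × ℕ → ℕ) (k : ℕ) :
    rectGK u v w k ≤ rectGK u (v + 1) w k := by
  have := maxWeight_mono (v := v + 1) hu (by omega) w (show k ≤ k + 1 by omega)
  suffices maxWeight u v w (k + 1) + maxWeight u (v + 1) w k ≤
      maxWeight u v w k + maxWeight u (v + 1) w (k + 1) by
    unfold rectGK; omega
  rcases Nat.eq_zero_or_pos k with rfl | hk
  · rw [maxWeight_zero hu hv, maxWeight_zero hu (by omega)]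
    simpa using maxWeight_le_maxWeight_succ_right hu hv w 1
  obtain ⟨γ, hγ, hγw⟩ := maxWeight_mem_stairWeights hu hv w (k + 1)
  obtain ⟨δ, hδ, hδw⟩ := maxWeight_mem_stairWeights (v := v + 1) hu (by omega) w k
  have := sum_add_sum_le_maxWeight_add_maxWeight hu hv hk w hγ hδ
  rwa [← hγw, ← hδw, show (k + 1 + k) / 2 = k by omega,
    show (k + 1 + k + 1) / 2 = k + 1 by omega] at this

lemma rectGK_succ_succ_right_le (hu : 1 ≤ u) (hv : 1 ≤ v) (w : ℕ × ℕ → ℕ) (k : ℕ) :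
    rectGK u (v + 1) w (k + 1) ≤ rectGK u v w k := by
  have := maxWeight_mono hu hv w (show k ≤ k + 1 by omega)
  suffices maxWeight u (v + 1) w (k + 2) + maxWeight u v w k ≤
      maxWeight u (v + 1) w (k + 1) + maxWeight u v w (k + 1) by
    unfold rectGK; rw [show k + 1 + 1 = k + 2 from rfl]; omega
  obtain ⟨γ, hγ, hγw⟩ := maxWeight_mem_stairWeights hu hv w k
  obtain ⟨δ, hδ, hδw⟩ := maxWeight_mem_stairWeights (v := v + 1) hu (by omega) w (k + 2)
  have := sum_add_sum_le_maxWeight_add_maxWeight hu hv (by omega) w hγ hδ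
  rw [← hγw, ← hδw, show (k + (k + 2)) / 2 = k + 1 by omega,
    show (k + (k + 2) + 1) / 2 = k + 1 by omega] at this
  omega

lemma rectGK_swap (hu : 1 ≤ u) (hv : 1 ≤ v) (w : ℕ × ℕ → ℕ) (k : ℕ) :
    rectGK u v w k = rectGK v u (w ∘ Prod.swap) k := by
  simp only [rectGK, maxWeight_swap hu hv w]

lemma rectGK_le_rectGK_succ_down (hu : 1 ≤ u) (hv : 1 ≤ v) (w : ℕ × ℕ → ℕ) (k : ℕ) :
    rectGK u v w k ≤ rectGK (u + 1) v w k := by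
  rw [rectGK_swap hu hv, rectGK_swap (by omega) hv]
  exact rectGK_le_rectGK_succ_right hv hu _ k

lemma rectGK_succ_succ_down_le (hu : 1 ≤ u) (hv : 1 ≤ v) (w : ℕ × ℕ → ℕ) (k : ℕ) :
    rectGK (u + 1) v w (k + 1) ≤ rectGK u v w k := by
  rw [rectGK_swap hu hv, rectGK_swap (by omega) hv]
  exact rectGK_succ_succ_right_le hv hu _ k

end rectGK

namespace IsPartition

variable {lam : ℕ → ℕ}

lemma antitone (hpart : IsPartition lam) {i j : ℕ} (hi : 1 ≤ i) (hij : i ≤ j) :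
    lam j ≤ lam i := by
  induction j, hij using Nat.le_induction with
  | base => exact le_rfl
  | succ n hn ih => exact (hpart.1 n (by omega)).trans ih

lemma mem_Fer_of_le (hpart : IsPartition lam) {p q : ℕ × ℕ}
    (hq : q ∈ Fer lam) (h₁ : (1, 1) ≤ p) (h₂ : p ≤ q) : p ∈ Fer lam := by
  rw [Prod.le_def] at h₁ h₂
  exact ⟨h₁.1, h₁.2, h₂.2.trans (hq.2.2.trans (hpart.antitone h₁.1 h₂.1))⟩

lemma mem_ideal_iff (hpart : IsPartition lam) {c p : ℕ × ℕ} (hc : c ∈ Fer lam) :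
    p ∈ ideal lam c ↔ (1, 1) ≤ p ∧ p ≤ c :=
  ⟨fun ⟨hp, hle⟩ => ⟨Prod.le_def.2 ⟨hp.1, hp.2.1⟩, hle⟩,
    fun ⟨h₁, h₂⟩ => ⟨hpart.mem_Fer_of_le hc h₁ h₂, h₂⟩⟩

end IsPartition

lemma exists_stair_of_isChain {u v : ℕ} : ∀ {l : List (ℕ × ℕ)}, l ≠ [] →
    (∀ p ∈ l, (1, 1) ≤ p ∧ p ≤ (u, v)) →
    l.IsChain (fun p q => q = (p.1 + 1, p.2) ∨ q = (p.1, p.2 + 1)) →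
    ∃ s, IsStair u v s ∧ ∀ p ∈ l, p ∈ cells s (u + v - 2)
  | [], h, _, _ => absurd rfl h
  | [a], _, hl, _ => by
    obtain ⟨h₁, h₂⟩ := hl a (List.mem_singleton_self a)
    obtain ⟨s, hs, hsa⟩ := exists_stair_through h₁ h₂
    simp only [Prod.le_def] at h₁ h₂
    exact ⟨s, hs, fun p hp => by
      obtain rfl := List.mem_singleton.1 hp
      exact hs.mem_cells.2 ⟨_, by omega, hsa, by omega⟩⟩
  | a :: q :: l, _, hl, hch => by
    obtain ⟨s, hs, hcov⟩ := exists_stair_of_isChain (List.cons_ne_nil q l)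
      (fun p hp => hl p (List.mem_cons_of_mem a hp)) (List.isChain_cons_cons.1 hch).2
    have hlev : ∀ p ∈ q :: l, a.1 + a.2 < p.1 + p.2 := by
      have := ((List.isChain_map (R := fun x y : ℕ => x < y) fun p : ℕ × ℕ => p.1 + p.2).2
        (hch.imp fun p q h => by rcases h with rfl | rfl <;> dsimp only <;> omega)).pairwise
      exact List.pairwise_cons.1 (List.pairwise_map.1 this) |>.1
    obtain ⟨ha₁, ha₂⟩ := hl a List.mem_cons_self
    simp only [Prod.le_def] at ha₁ ha₂
    obtain ⟨dq, -, hsq, hdq⟩ := hs.mem_cells.1 (hcov q List.mem_cons_self)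
    have haq := (List.isChain_cons_cons.1 hch).1
    -- along the first row and down column `a.2` to `a`, then continue with `s`
    refine ⟨fun d => if d + 2 ≤ a.1 + a.2 then max 1 (d + 2 - a.2) else s d,
      ⟨by dsimp only; rw [if_pos (by omega)]; omega, fun d => ?_, fun d hd => ?_⟩, fun p hp => ?_⟩
    · dsimp only
      by_cases h : d + 2 < a.1 + a.2
      · rw [if_pos h.le, if_pos (by omega)]; omega
      by_cases h' : d + 2 = a.1 + a.2
      · obtain rfl : dq = d + 1 := by rcases haq with rfl | rfl <;> dsimp only at hdq <;> omega
        rw [if_pos h'.le, if_neg (by omega), hsq]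
        rcases haq with rfl | rfl <;> dsimp only <;> omega
      · rw [if_neg (by omega), if_neg (by omega)]; exact hs.2.1 d
    · dsimp only
      split_ifs
      · omega
      · exact hs.2.2 d hd
    · simp only [cells, mem_image, mem_range]
      rcases List.mem_cons.1 hp with rfl | hp
      · refine ⟨p.1 + p.2 - 2, by omega, Prod.ext ?_ ?_⟩ <;> dsimp only <;>
          rw [if_pos (by omega)] <;> omega
      · obtain ⟨d, hd, hsd, hpd⟩ := hs.mem_cells.1 (hcov p hp)
        have := hlev p hp
        refine ⟨d, by omega, Prod.ext ?_ ?_⟩ <;> dsimp only <;> rw [if_neg (by omega)] <;> omega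

lemma IsStair.isPath {lam : ℕ → ℕ} (hpart : IsPartition lam) {c : ℕ × ℕ} (hc : c ∈ Fer lam)
    {s : ℕ → ℕ} (hs : IsStair c.1 c.2 s) : IsPath (ideal lam c) (GArrow lam)
      ((List.range (c.1 + c.2 - 2 + 1)).map fun d => (s d, d + 2 - s d)) := by
  have hmem : ∀ d ≤ c.1 + c.2 - 2, (s d, d + 2 - s d) ∈ ideal lam c := fun d hd => by
    have := hs.2.2 d (by have := hc.1; have := hc.2.1; omega)
    have := hs.one_le d
    have := hs.le_succ d
    rw [hpart.mem_ideal_iff hc, Prod.le_def, Prod.le_def]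
    dsimp only
    omega
  refine ⟨by simp, fun p hp => ?_, ?_⟩
  · obtain ⟨d, hd, rfl⟩ := List.mem_map.1 hp
    exact hmem d (by simp only [List.mem_range] at hd; omega)
  · rw [List.Chain', List.isChain_map, List.isChain_range_succ]
    intro d hd
    refine ⟨(hmem d hd.le).1, (hmem (d + 1) hd).1, ?_⟩
    have := hs.le_succ d
    rcases hs.2.1 d with h | h <;> rw [h]
    · exact Or.inr (Prod.ext rfl (by dsimp only; omega))
    · exact Or.inl (Prod.ext rfl (by dsimp only; omega))

lemma toFinset_map_range_eq_cells (s : ℕ → ℕ) (L : ℕ) :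
    ((List.range (L + 1)).map fun d => (s d, d + 2 - s d)).toFinset = cells s L := by
  ext; simp [cells]

lemma extendF_apply {lam : ℕ → ℕ} (f : Filling lam) {p : ℕ × ℕ} (hp : p ∈ Fer lam) :
    extendF lam f p = f ⟨p, hp⟩ :=
  Subtype.val_injective.extend_apply f _ ⟨p, hp⟩

namespace IsPartition

variable {lam : ℕ → ℕ}

lemma MGK_ideal_eq_maxWeight (hpart : IsPartition lam) {c : ℕ × ℕ} (hc : c ∈ Fer lam)
    (w : ℕ × ℕ → ℕ) (ℓ : ℕ) : MGK (ideal lam c) (GArrow lam) w ℓ = maxWeight c.1 c.2 w ℓ := by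
  have hc₁ : 1 ≤ c.1 := hc.1
  have hc₂ : 1 ≤ c.2 := hc.2.1
  have hbdd : BddAbove {x | ∃ γ : Fin ℓ → List (ℕ × ℕ),
      (∀ i, IsPath (ideal lam c) (GArrow lam) (γ i)) ∧ x = wt w γ} := by
    refine ⟨∑ p ∈ Icc (1, 1) c, w p, ?_⟩
    rintro x ⟨γ, hγ, rfl⟩
    refine sum_le_sum_of_subset fun p hp => ?_
    obtain ⟨i, -, hpi⟩ := mem_biUnion.1 hp
    exact mem_Icc.2 ((hpart.mem_ideal_iff hc).1 ((hγ i).2.1 p (List.mem_toFinset.1 hpi)))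
  apply le_antisymm
  · refine csSup_le ⟨_, fun _ => [(1, 1)],
      fun _ => ⟨by simp, fun p hp => ?_, List.isChain_singleton _⟩, rfl⟩ ?_
    · rw [List.mem_singleton.1 hp, hpart.mem_ideal_iff hc]
      exact ⟨le_rfl, Prod.le_def.2 ⟨hc₁, hc₂⟩⟩
    rintro x ⟨γ, hγ, rfl⟩
    have hstair (i : Fin ℓ) : ∃ s, IsStair c.1 c.2 s ∧ ∀ p ∈ γ i, p ∈ cells s (c.1 + c.2 - 2) :=
      exists_stair_of_isChain (hγ i).1 (fun p hp => (hpart.mem_ideal_iff hc).1 ((hγ i).2.1 p hp))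
        ((hγ i).2.2.imp fun _ _ h => h.2.2)
    choose t ht hcov using hstair
    refine (sum_le_sum_of_subset fun p hp => ?_).trans
      (le_csSup (bddAbove_stairWeights hc₁ hc₂ w ℓ) ⟨t, ht, rfl⟩)
    obtain ⟨i, -, hpi⟩ := mem_biUnion.1 hp
    exact mem_biUnion.2 ⟨i, mem_univ _, hcov i p (List.mem_toFinset.1 hpi)⟩
  · refine csSup_le ⟨_, maxWeight_mem_stairWeights hc₁ hc₂ w ℓ⟩ ?_
    rintro x ⟨t, ht, rfl⟩
    refine le_of_eq_of_le ?_ (le_csSup hbdd ⟨_, fun i => (ht i).isPath hpart hc, rfl⟩)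
    simp only [wt, toFinset_map_range_eq_cells]

lemma GK_ideal_eq_rectGK (hpart : IsPartition lam) {c : ℕ × ℕ} (hc : c ∈ Fer lam)
    (w : ℕ × ℕ → ℕ) (k : ℕ) : GK (ideal lam c) (GArrow lam) w k = rectGK c.1 c.2 w k := by
  simp only [GK, rectGK, hpart.MGK_ideal_eq_maxWeight hc]

lemma isGreatest_diag_iff (hpart : IsPartition lam) {m : ℤ} {c : ℕ × ℕ} :
    IsGreatest (diag lam m) c ↔ c ∈ diag lam m ∧ (c.1 + 1, c.2 + 1) ∉ Fer lam := by
  refine ⟨fun h => ⟨h.1, fun hc => ?_⟩, fun ⟨hc, hnot⟩ => ⟨hc, fun q hq => ?_⟩⟩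
  · have := h.2 (show (c.1 + 1, c.2 + 1) ∈ diag lam m from ⟨hc, by have := h.1.2; push_cast; omega⟩)
    simp [Prod.le_def] at this
  · have hqc : (q.1 : ℤ) - q.2 = c.1 - c.2 := by have := hq.2; have := hc.2; omega
    by_contra hlt
    rw [Prod.le_def] at hlt
    refine hnot (hpart.mem_Fer_of_le hq.1 (Prod.le_def.2 ⟨by omega, by omega⟩) (Prod.le_def.2 ?_))
    dsimp only
    omega

lemma exists_isGreatest_diag (hpart : IsPartition lam) {p : ℕ × ℕ} (hp : p ∈ Fer lam) :
    ∃ c, IsGreatest (diag lam (p.1 - p.2 + lam 1)) c := by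
  classical
  set t := Nat.findGreatest (fun t => (p.1 + t, p.2 + t) ∈ Fer lam) (lam 1)
  have ht : (p.1 + t, p.2 + t) ∈ Fer lam := Nat.findGreatest_spec (P := fun t =>
    (p.1 + t, p.2 + t) ∈ Fer lam) (Nat.zero_le _) (by simpa using hp)
  refine ⟨(p.1 + t, p.2 + t), hpart.isGreatest_diag_iff.2 ⟨⟨ht, by push_cast; ring⟩, fun h => ?_⟩⟩
  have h1 : p.2 + t + 1 ≤ lam 1 := h.2.2.trans (hpart.antitone le_rfl h.1)
  exact Nat.findGreatest_is_greatest (Nat.lt_succ_self t) (by omega) h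

lemma isGreatest_diag_right (hpart : IsPartition lam) {p c c' : ℕ × ℕ} (hp : p ∈ Fer lam)
    (hq : (p.1, p.2 + 1) ∈ Fer lam) (hc : IsGreatest (diag lam (p.1 - p.2 + lam 1)) c)
    (hc' : IsGreatest (diag lam (p.1 - p.2 + lam 1 - 1)) c') :
    c' = (c.1, c.2 + 1) ∨ c' = (c.1 - 1, c.2) ∧ p.1 < c.1 := by
  have hpc := hc.2 ⟨hp, rfl⟩
  obtain ⟨⟨hcF, hcd⟩, hcn⟩ := hpart.isGreatest_diag_iff.1 hc
  rw [Prod.le_def] at hpc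
  by_cases hr : (c.1, c.2 + 1) ∈ Fer lam
  · refine Or.inl (hc'.unique (hpart.isGreatest_diag_iff.2 ⟨⟨hr, by push_cast; omega⟩, ?_⟩))
    exact fun h => hcn (hpart.mem_Fer_of_le h (Prod.le_def.2 ⟨by omega, by omega⟩)
      (Prod.le_def.2 ⟨le_rfl, by dsimp only; omega⟩))
  · have hpc' : p.1 < c.1 := by
      by_contra h
      have h₁ : c.1 = p.1 := by omega
      have h₂ : c.2 = p.2 := by omega
      exact hr (by rw [h₁, h₂]; exact hq)
    have hp₁ : 1 ≤ p.1 := hp.1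
    refine Or.inr ⟨hc'.unique (hpart.isGreatest_diag_iff.2 ⟨⟨hpart.mem_Fer_of_le hcF
      (Prod.le_def.2 ⟨by dsimp only; omega, hcF.2.1⟩) (Prod.le_def.2 ⟨by omega, le_rfl⟩), ?_⟩, ?_⟩),
      hpc'⟩
    · push_cast [show 1 ≤ c.1 by omega]; omega
    · simpa [show c.1 - 1 + 1 = c.1 by omega] using hr

lemma isGreatest_diag_down (hpart : IsPartition lam) {p c c' : ℕ × ℕ} (hp : p ∈ Fer lam)
    (hq : (p.1 + 1, p.2) ∈ Fer lam) (hc : IsGreatest (diag lam (p.1 - p.2 + lam 1)) c)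
    (hc' : IsGreatest (diag lam (p.1 - p.2 + lam 1 + 1)) c') :
    c' = (c.1 + 1, c.2) ∨ c' = (c.1, c.2 - 1) ∧ p.2 < c.2 := by
  have hpc := hc.2 ⟨hp, rfl⟩
  obtain ⟨⟨hcF, hcd⟩, hcn⟩ := hpart.isGreatest_diag_iff.1 hc
  rw [Prod.le_def] at hpc
  by_cases hd : (c.1 + 1, c.2) ∈ Fer lam
  · refine Or.inl (hc'.unique (hpart.isGreatest_diag_iff.2 ⟨⟨hd, by push_cast; omega⟩, ?_⟩))
    exact fun h => hcn (hpart.mem_Fer_of_le h (Prod.le_def.2 ⟨by omega, by omega⟩)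
      (Prod.le_def.2 ⟨by dsimp only; omega, le_rfl⟩))
  · have hpc' : p.2 < c.2 := by
      by_contra h
      have h₁ : c.2 = p.2 := by omega
      have h₂ : c.1 = p.1 := by omega
      exact hd (by rw [h₁, h₂]; exact hq)
    have hp₂ : 1 ≤ p.2 := hp.2.1
    refine Or.inr ⟨hc'.unique (hpart.isGreatest_diag_iff.2 ⟨⟨hpart.mem_Fer_of_le hcF
      (Prod.le_def.2 ⟨hcF.1, by dsimp only; omega⟩) (Prod.le_def.2 ⟨le_rfl, by omega⟩), ?_⟩, ?_⟩),
      hpc'⟩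
    · push_cast [show 1 ≤ c.2 by omega]; omega
    · simpa [show c.2 - 1 + 1 = c.2 by omega] using hd


lemma isRPP_of_le_succ (hpart : IsPartition lam) (g : Filling lam)
    (hright : ∀ p (hp : p ∈ Fer lam) (hq : (p.1, p.2 + 1) ∈ Fer lam), g ⟨p, hp⟩ ≤ g ⟨_, hq⟩)
    (hdown : ∀ p (hp : p ∈ Fer lam) (hq : (p.1 + 1, p.2) ∈ Fer lam), g ⟨p, hp⟩ ≤ g ⟨_, hq⟩) :
    IsRPP lam g := by
  rintro ⟨p, hp⟩ ⟨q, hq⟩ hpq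
  obtain ⟨hpq₁, hpq₂⟩ := Prod.le_def.1 hpq
  have hmem {i j : ℕ} (hi : p.1 ≤ i) (hj : p.2 ≤ j) (hiq : i ≤ q.1) (hjq : j ≤ q.2) :
      (i, j) ∈ Fer lam :=
    hpart.mem_Fer_of_le hq (Prod.le_def.2 ⟨hp.1.trans hi, hp.2.1.trans hj⟩)
      (Prod.le_def.2 ⟨hiq, hjq⟩)
  have hrow (j : ℕ) (hj : p.2 ≤ j) (hjq : j ≤ q.2) :
      extendF lam g p ≤ extendF lam g (p.1, j) := by
    induction j, hj using Nat.le_induction with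
    | base => exact le_rfl
    | succ j hj ih =>
      refine (ih (by omega)).trans ?_
      rw [extendF_apply g (hmem le_rfl hj hpq₁ (by omega)),
        extendF_apply g (hmem le_rfl (by omega) hpq₁ hjq)]
      exact hright _ _ _
  have hcol (i : ℕ) (hi : p.1 ≤ i) (hiq : i ≤ q.1) :
      extendF lam g (p.1, q.2) ≤ extendF lam g (i, q.2) := by
    induction i, hi using Nat.le_induction with
    | base => exact le_rfl
    | succ i hi ih =>
      refine (ih (by omega)).trans ?_
      rw [extendF_apply g (hmem hi hpq₂ (by omega) le_rfl),
        extendF_apply g (hmem (by omega) hpq₂ hiq le_rfl)]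
      exact hdown _ _ _
  have := (hrow q.2 hpq₂ le_rfl).trans (hcol q.1 hpq₁ le_rfl)
  rwa [extendF_apply g hp, extendF_apply g hq] at this

lemma apply_le_apply_succ_right (hpart : IsPartition lam) (w : ℕ × ℕ → ℕ) {g : Filling lam}
    (hg : ∀ p (hp : p ∈ Fer lam) c, IsGreatest (diag lam (p.1 - p.2 + lam 1)) c →
      g ⟨p, hp⟩ = rectGK c.1 c.2 w (c.1 - p.1))
    {p : ℕ × ℕ} (hp : p ∈ Fer lam) (hq : (p.1, p.2 + 1) ∈ Fer lam) : g ⟨p, hp⟩ ≤ g ⟨_, hq⟩ := by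
  obtain ⟨c, hc⟩ := hpart.exists_isGreatest_diag hp
  obtain ⟨c', hc'⟩ := hpart.exists_isGreatest_diag hq
  have hc₁ : 1 ≤ c.1 := hc.1.1.1
  have hc₂ : 1 ≤ c.2 := hc.1.1.2.1
  rw [hg p hp c hc, hg _ hq c' hc']
  rcases hpart.isGreatest_diag_right hp hq hc (by convert hc' using 2; push_cast; ring)
    with rfl | ⟨rfl, hlt⟩
  · exact rectGK_le_rectGK_succ_right hc₁ hc₂ w _
  · have := rectGK_succ_succ_down_le (u := c.1 - 1) (by have := hp.1; omega) hc₂ w (c.1 - 1 - p.1)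
    rwa [show c.1 - 1 + 1 = c.1 by omega, show c.1 - 1 - p.1 + 1 = c.1 - p.1 by omega] at this

lemma apply_le_apply_succ_down (hpart : IsPartition lam) (w : ℕ × ℕ → ℕ) {g : Filling lam}
    (hg : ∀ p (hp : p ∈ Fer lam) c, IsGreatest (diag lam (p.1 - p.2 + lam 1)) c →
      g ⟨p, hp⟩ = rectGK c.1 c.2 w (c.1 - p.1))
    {p : ℕ × ℕ} (hp : p ∈ Fer lam) (hq : (p.1 + 1, p.2) ∈ Fer lam) : g ⟨p, hp⟩ ≤ g ⟨_, hq⟩ := by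
  obtain ⟨c, hc⟩ := hpart.exists_isGreatest_diag hp
  obtain ⟨c', hc'⟩ := hpart.exists_isGreatest_diag hq
  have hc₁ : 1 ≤ c.1 := hc.1.1.1
  have hc₂ : 1 ≤ c.2 := hc.1.1.2.1
  have hpc : p.1 < c'.1 := by have := (hc'.2 ⟨hq, rfl⟩).1; dsimp only at this; omega
  rw [hg p hp c hc, hg _ hq c' hc']
  rcases hpart.isGreatest_diag_down hp hq hc (by convert hc' using 2; push_cast; ring)
    with rfl | ⟨rfl, hlt⟩
  · simpa using rectGK_le_rectGK_succ_down hc₁ hc₂ w (c.1 - p.1)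
  · have := rectGK_succ_succ_right_le (v := c.2 - 1) hc₁ (by have := hp.2.1; omega) w
      (c.1 - (p.1 + 1))
    dsimp only at hpc ⊢
    rwa [show c.2 - 1 + 1 = c.2 by omega, show c.1 - (p.1 + 1) + 1 = c.1 - p.1 by omega] at this

end IsPartition

theorem RSK_isRPP_general (lam : ℕ → ℕ) (hpart : IsPartition lam)
    (f g : Filling lam)
    (hg : ∀ (m : ℤ) (uv : ℕ × ℕ), IsGreatest (diag lam m) uv →
      ∀ p, ∀ hp : p ∈ diag lam m,
        g ⟨p, hp.1⟩ = GK (ideal lam uv) (GArrow lam) (extendF lam f) (uv.1 - p.1)) :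
    IsRPP lam g := by
  have hval : ∀ p (hp : p ∈ Fer lam) c, IsGreatest (diag lam (p.1 - p.2 + lam 1)) c →
      g ⟨p, hp⟩ = rectGK c.1 c.2 (extendF lam f) (c.1 - p.1) := fun p hp c hc => by
    rw [hg _ c hc p ⟨hp, rfl⟩, hpart.GK_ideal_eq_rectGK hc.1.1]
  exact hpart.isRPP_of_le_succ g (fun _ => hpart.apply_le_apply_succ_right _ hval)
    (fun _ => hpart.apply_le_apply_succ_down _ hval)

/-- For a nonzero integer partition `λ` and a filling `f` of shape `λ`,
the filling `g = RSK_λ(f)` is a reverse plane partition of shape `λ`. -/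
theorem RSK_isRPP (lam : ℕ → ℕ) (hpart : IsPartition lam) (hne : lam 1 ≠ 0)
    (f g : Filling lam)
    (hg : ∀ (m : ℤ) (uv : ℕ × ℕ), IsGreatest (diag lam m) uv →
      ∀ p, ∀ hp : p ∈ diag lam m,
        g ⟨p, hp.1⟩ = GK (ideal lam uv) (GArrow lam) (extendF lam f) (uv.1 - p.1)) :
    IsRPP lam g :=
  RSK_isRPP_general lam hpart f g hg

end RSKPaper
end
end

section
/- For every nonzero integer partition λ there exists a unique elementary interval bipartition (B,E) such that λ(B,E) = λ. -/
/-!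
Read `B` and `E` as the down and left steps of the south-east boundary of the Ferrers diagram
of `λ`, traversed from its north-east corner: the `i`-th down step comes after `i - 1` down steps
and `λ₁ - λᵢ` left steps, so `bᵢ = i + λ₁ - λᵢ`, and exactly `λᵢ` left steps follow it.
Conversely, if `B ∪ E = {1, …, j}`, counting the elements above `bᵢ` gives
`bᵢ + λ(B,E)ᵢ + #B = j + i`. For an elementary bipartition `b₁ = 1` and `j ∈ E`, which forces
`#B` to be the number of nonzero parts of `λ(B,E)` and then determines every `bᵢ`.
-/

noncomputable section

namespace RSKPaper

theorem nth_eq_orderEmbOfFin (B : Finset ℕ) {k i : ℕ} (h : B.card = k) (h1 : 1 ≤ i)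
    (h2 : i ≤ k) : nth B i = B.orderEmbOfFin h ⟨i - 1, by omega⟩ := by
  subst h
  rw [Finset.orderEmbOfFin_apply, nth,
    List.getD_eq_getElem _ _ (by rw [Finset.length_sort]; omega)]
  rfl

theorem nth_mem (B : Finset ℕ) {i : ℕ} (h1 : 1 ≤ i) (h2 : i ≤ B.card) : nth B i ∈ B := by
  rw [nth_eq_orderEmbOfFin B rfl h1 h2]
  exact B.orderEmbOfFin_mem rfl _

theorem nth_one_eq_min' {B : Finset ℕ} (hB : B.Nonempty) : nth B 1 = B.min' hB := by
  rw [nth_eq_orderEmbOfFin B rfl le_rfl hB.card_pos, ← Finset.orderEmbOfFin_zero rfl hB.card_pos]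

theorem card_filter_nth_lt (B : Finset ℕ) {i : ℕ} (h1 : 1 ≤ i) (h2 : i ≤ B.card) :
    (B.filter (nth B i < ·)).card = B.card - i := by
  set emb := B.orderEmbOfFin rfl
  have hfilter : B.filter (nth B i < ·) = (Finset.Ioi (⟨i - 1, by omega⟩ : Fin B.card)).map
      emb.toEmbedding := by
    ext x
    simp only [Finset.mem_filter, Finset.mem_map, Finset.mem_Ioi, nth_eq_orderEmbOfFin B rfl h1 h2]
    constructor
    · rintro ⟨hx, hlt⟩
      obtain ⟨k, rfl⟩ : x ∈ Set.range emb := by rwa [Finset.range_orderEmbOfFin]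
      exact ⟨k, emb.lt_iff_lt.mp hlt, rfl⟩
    · rintro ⟨k, hk, rfl⟩
      exact ⟨B.orderEmbOfFin_mem rfl k, emb.lt_iff_lt.mpr hk⟩
  rw [hfilter, Finset.card_map, Fin.card_Ioi]
  dsimp only
  omega

theorem image_nth_Icc (B : Finset ℕ) : (Finset.Icc 1 B.card).image (nth B) = B := by
  apply Finset.Subset.antisymm
  · intro x hx
    obtain ⟨i, hi, rfl⟩ := Finset.mem_image.mp hx
    rw [Finset.mem_Icc] at hi
    exact nth_mem B hi.1 hi.2
  · intro x hx
    obtain ⟨k, rfl⟩ : x ∈ Set.range (B.orderEmbOfFin rfl) := by rwa [Finset.range_orderEmbOfFin]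
    refine Finset.mem_image.mpr ⟨k + 1, Finset.mem_Icc.mpr ⟨by omega, k.isLt⟩, ?_⟩
    rw [nth_eq_orderEmbOfFin B rfl (by omega) k.isLt]
    rfl

theorem nth_image_Icc_of_strictMonoOn {g : ℕ → ℕ} {p : ℕ}
    (hg : StrictMonoOn g (Set.Icc 1 p)) {i : ℕ} (h1 : 1 ≤ i) (h2 : i ≤ p) :
    nth ((Finset.Icc 1 p).image g) i = g i := by
  set s := (Finset.Icc 1 p).image g
  have hcard : s.card = p := by
    rw [Finset.card_image_of_injOn (by simpa using hg.injOn), Nat.card_Icc, Nat.add_sub_cancel]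
  have hunique : (fun k : Fin p => g (k + 1)) = s.orderEmbOfFin hcard :=
    Finset.orderEmbOfFin_unique hcard
      (fun k => Finset.mem_image_of_mem g (Finset.mem_Icc.mpr ⟨by omega, k.isLt⟩))
      (fun k l hkl => hg ⟨by omega, k.isLt⟩ ⟨by omega, l.isLt⟩ (by simpa using hkl))
  rw [nth_eq_orderEmbOfFin s hcard h1 h2, ← hunique]
  exact congrArg g (Nat.sub_add_cancel h1)

theorem nth_add_lamBE_add_card {B E : Finset ℕ} {j i : ℕ} (hdisj : Disjoint B E)
    (hunion : B ∪ E = Finset.Icc 1 j) (h1 : 1 ≤ i) (h2 : i ≤ B.card) :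
    nth B i + lamBE B E i + B.card = j + i := by
  have hb : nth B i ∈ Finset.Icc 1 j := hunion ▸ Finset.mem_union_left E (nth_mem B h1 h2)
  have hsplit : ((B ∪ E).filter (nth B i < ·)).card
      = (B.filter (nth B i < ·)).card + (E.filter (nth B i < ·)).card := by
    rw [Finset.filter_union, Finset.card_union_of_disjoint (Finset.disjoint_filter_filter hdisj)]
  have hIoc : (Finset.Icc 1 j).filter (nth B i < ·) = Finset.Ioc (nth B i) j := by
    ext x
    simp only [Finset.mem_filter, Finset.mem_Icc, Finset.mem_Ioc]
    omega
  rw [hunion, hIoc, Nat.card_Ioc, card_filter_nth_lt B h1 h2] at hsplit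
  rw [Finset.mem_Icc] at hb
  simp only [lamBE, if_pos (And.intro h1 h2)]
  omega

theorem IsPartition.antitoneOn {lam : ℕ → ℕ} (h : IsPartition lam) :
    AntitoneOn lam (Set.Ici 1) :=
  antitoneOn_nat_Ici_of_succ_le h.1

theorem IsPartition.exists_ne_zero_iff_le {lam : ℕ → ℕ} (h : IsPartition lam) :
    ∃ p, ∀ i, 1 ≤ i → (lam i ≠ 0 ↔ i ≤ p) := by
  have hex : ∃ n, lam (n + 1) = 0 := by
    obtain ⟨N, hN⟩ := h.2
    exact ⟨N, hN _ (Nat.le_succ N)⟩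
  refine ⟨Nat.find hex, fun i hi => ⟨fun hne => ?_, fun hle => ?_⟩⟩
  · by_contra hlt
    have := h.antitoneOn (Set.mem_Ici.mpr (Nat.le_add_left 1 _)) (Set.mem_Ici.mpr hi)
      (by omega : Nat.find hex + 1 ≤ i)
    rw [Nat.find_spec hex] at this
    omega
  · have := Nat.find_min hex (show i - 1 < Nat.find hex by omega)
    rwa [Nat.sub_add_cancel hi] at this

def downStep (lam : ℕ → ℕ) (i : ℕ) : ℕ := i + lam 1 - lam i

def downSteps (lam : ℕ → ℕ) (p : ℕ) : Finset ℕ := (Finset.Icc 1 p).image (downStep lam)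

def leftSteps (lam : ℕ → ℕ) (p : ℕ) : Finset ℕ := Finset.Icc 1 (p + lam 1) \ downSteps lam p

section Steps

variable {lam : ℕ → ℕ} {p : ℕ}

theorem strictMonoOn_downStep (hlam : AntitoneOn lam (Set.Ici 1)) :
    StrictMonoOn (downStep lam) (Set.Ici 1) := by
  intro i hi j hj hij
  have hji := hlam hi hj hij.le
  have hi1 := hlam Set.self_mem_Ici hi hi
  unfold downStep
  omega

theorem card_downSteps (hlam : AntitoneOn lam (Set.Ici 1)) : (downSteps lam p).card = p := by
  rw [downSteps, Finset.card_image_of_injOn, Nat.card_Icc, Nat.add_sub_cancel]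
  exact (strictMonoOn_downStep hlam).injOn.mono fun i hi => (Finset.mem_Icc.mp hi).1

theorem nth_downSteps (hlam : AntitoneOn lam (Set.Ici 1)) {i : ℕ} (h1 : 1 ≤ i) (h2 : i ≤ p) :
    nth (downSteps lam p) i = downStep lam i :=
  nth_image_Icc_of_strictMonoOn ((strictMonoOn_downStep hlam).mono fun _ hk => hk.1) h1 h2

theorem downSteps_subset_Icc (hlam : AntitoneOn lam (Set.Ici 1)) :
    downSteps lam p ⊆ Finset.Icc 1 (p + lam 1) := by
  intro x hx
  obtain ⟨i, hi, rfl⟩ := Finset.mem_image.mp hx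
  rw [Finset.mem_Icc] at hi ⊢
  have := hlam Set.self_mem_Ici (Set.mem_Ici.mpr hi.1) hi.1
  unfold downStep
  omega

theorem downSteps_union_leftSteps (hlam : AntitoneOn lam (Set.Ici 1)) :
    downSteps lam p ∪ leftSteps lam p = Finset.Icc 1 (p + lam 1) :=
  Finset.union_sdiff_of_subset (downSteps_subset_Icc hlam)

theorem isIntervalBipartition_steps (hlam : AntitoneOn lam (Set.Ici 1)) (h1p : 1 ≤ p) :
    IsIntervalBipartition (downSteps lam p) (leftSteps lam p) :=
  ⟨Finset.disjoint_sdiff, 1, p + lam 1, le_rfl, by omega, downSteps_union_leftSteps hlam⟩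

theorem isElementary_steps (hlam : AntitoneOn lam (Set.Ici 1))
    (hp : ∀ i, 1 ≤ i → (lam i ≠ 0 ↔ i ≤ p)) (h1p : 1 ≤ p) :
    IsElementary (downSteps lam p) (leftSteps lam p) := by
  refine ⟨Finset.mem_image.mpr ⟨1, Finset.mem_Icc.mpr ⟨le_rfl, h1p⟩, by simp [downStep]⟩,
    p + lam 1, Finset.mem_sdiff.mpr ⟨Finset.mem_Icc.mpr ⟨by omega, le_rfl⟩, fun hmem => ?_⟩,
    fun x hx => (Finset.mem_Icc.mp (downSteps_union_leftSteps hlam ▸ hx)).2⟩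
  obtain ⟨i, hi, hEq⟩ := Finset.mem_image.mp hmem
  rw [Finset.mem_Icc] at hi
  have hi1 := hlam Set.self_mem_Ici (Set.mem_Ici.mpr hi.1) hi.1
  have hpi := hlam (Set.mem_Ici.mpr hi.1) (Set.mem_Ici.mpr h1p) hi.2
  have hp0 := (hp p h1p).2 le_rfl
  unfold downStep at hEq
  omega

theorem lamBE_steps (hlam : AntitoneOn lam (Set.Ici 1)) (hp : ∀ i, 1 ≤ i → (lam i ≠ 0 ↔ i ≤ p))
    {i : ℕ} (hi : 1 ≤ i) : lamBE (downSteps lam p) (leftSteps lam p) i = lam i := by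
  by_cases hip : i ≤ p
  · have key := nth_add_lamBE_add_card (B := downSteps lam p) (E := leftSteps lam p)
      Finset.disjoint_sdiff (downSteps_union_leftSteps hlam) hi
      (by rwa [card_downSteps hlam])
    rw [nth_downSteps hlam hi hip, card_downSteps hlam] at key
    have hi1 := hlam Set.self_mem_Ici (Set.mem_Ici.mpr hi) hi
    unfold downStep at key
    omega
  · have hcard : ¬(1 ≤ i ∧ i ≤ (downSteps lam p).card) := by rw [card_downSteps hlam]; omega
    rw [lamBE, if_neg hcard]
    exact (not_not.mp (mt (hp i hi).1 hip)).symm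

end Steps

theorem IsElementary.exists_union_eq_Icc {B E : Finset ℕ} (hel : IsElementary B E)
    (hBE : IsIntervalBipartition B E) : ∃ j ∈ E, B ∪ E = Finset.Icc 1 j := by
  obtain ⟨-, a, j, ha, haj, hunion⟩ := hBE
  obtain ⟨h1B, M, hME, hM⟩ := hel
  have h1 : 1 ∈ Finset.Icc a j := hunion ▸ Finset.mem_union_left E h1B
  have hMj : M ∈ Finset.Icc a j := hunion ▸ Finset.mem_union_right B hME
  have hjM : j ≤ M := hM j (hunion ▸ Finset.mem_Icc.mpr ⟨haj, le_rfl⟩)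
  rw [Finset.mem_Icc] at h1 hMj
  obtain rfl : a = 1 := by omega
  exact ⟨j, le_antisymm hMj.2 hjM ▸ hME, hunion⟩

theorem eq_steps_of_lamBE_eq {B E : Finset ℕ} {lam : ℕ → ℕ} {p : ℕ}
    (hBE : IsIntervalBipartition B E) (hel : IsElementary B E)
    (hp : ∀ i, 1 ≤ i → (lam i ≠ 0 ↔ i ≤ p)) (heq : ∀ i, 1 ≤ i → lamBE B E i = lam i) :
    B = downSteps lam p ∧ E = leftSteps lam p := by
  obtain ⟨j, hjE, hunion⟩ := hel.exists_union_eq_Icc hBE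
  have hBpos : 0 < B.card := Finset.card_pos.mpr ⟨1, hel.1⟩
  have key : ∀ i, 1 ≤ i → i ≤ B.card → nth B i + lam i + B.card = j + i := fun i h1 h2 =>
    heq i h1 ▸ nth_add_lamBE_add_card hBE.1 hunion h1 h2
  have hnth1 : nth B 1 = 1 := by
    rw [nth_one_eq_min' ⟨1, hel.1⟩]
    exact le_antisymm (B.min'_le 1 hel.1)
      (Finset.mem_Icc.mp (hunion ▸ Finset.mem_union_left E (B.min'_mem _))).1
  have hlast : lam B.card ≠ 0 := by
    have hne : nth B B.card ≠ j := fun h =>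
      Finset.disjoint_left.mp hBE.1 (nth_mem B hBpos le_rfl) (h ▸ hjE)
    have := key _ hBpos le_rfl
    omega
  have hcard : B.card = p := by
    have hnext : lam (B.card + 1) = 0 := by
      rw [← heq _ (by omega)]
      simp [lamBE]
    have := (hp _ hBpos).1 hlast
    have := mt (hp _ (by omega)).2 (not_not.mpr hnext)
    omega
  have hj : j = p + lam 1 := by
    have := key 1 le_rfl hBpos
    omega
  have hB : B = downSteps lam p := by
    rw [← image_nth_Icc B, hcard, downSteps]
    refine Finset.image_congr fun i hi => ?_
    rw [Finset.mem_coe, Finset.mem_Icc] at hi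
    have := key i hi.1 (hcard ▸ hi.2)
    unfold downStep
    omega
  refine ⟨hB, ?_⟩
  rw [leftSteps, ← hB, ← hj, ← hunion, Finset.union_sdiff_cancel_left hBE.1]

/-- Every nonzero integer partition `λ` is of the form `λ(B, E)` for a
unique elementary interval bipartition `(B, E)`. -/
theorem existsUnique_elementary_intervalBipartition (lam : ℕ → ℕ)
    (hpart : IsPartition lam) (hne : lam 1 ≠ 0) :
    ∃! BE : Finset ℕ × Finset ℕ,
      IsIntervalBipartition BE.1 BE.2 ∧ IsElementary BE.1 BE.2 ∧
      ∀ i, 1 ≤ i → lamBE BE.1 BE.2 i = lam i := by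
  obtain ⟨p, hp⟩ := hpart.exists_ne_zero_iff_le
  have h1p : 1 ≤ p := (hp 1 le_rfl).1 hne
  refine ⟨(downSteps lam p, leftSteps lam p),
    ⟨isIntervalBipartition_steps hpart.antitoneOn h1p,
      isElementary_steps hpart.antitoneOn hp h1p, fun i hi => lamBE_steps hpart.antitoneOn hp hi⟩,
    ?_⟩
  rintro ⟨B, E⟩ ⟨hBE, hel, heq⟩
  obtain ⟨rfl, rfl⟩ := eq_steps_of_lamBE_eq hBE hel hp heq
  rfl

end RSKPaper
end
end
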